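/- arXiv:2402.06431 — 5 statements merged into one kernel-verified Lean document; each statement's English description precedes it below -/
import Mathlib

section
/- Let ξ_θ = √f_θ be square roots of densities of a μ-dominated statistical model (P_θ)_{θ∈Θ}, Θ ⊆ ℝ open, differentiable in L²(μ) at θ₀ with derivative ξ̇_{θ₀}. Then for any statistic T : X → ℝ with |T| ≤ M μ-a.s., the function γ_T(θ) = E_θ[T] = ∫ T f_θ dμ is differentiable at θ₀ with γ'_T(θ₀) = 2 ∫ ξ̇_{θ₀} ξ_{θ₀} T dμ. -/
open MeasureTheory Filter Topology Set

/-!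
Write `ξ = √f_θ`, `ξ₀ = √f_θ₀`, `Δ = θ - θ₀` and `r = ξ - ξ₀ - Δ D`. Pointwise,
`ξ² - ξ₀² - 2 Δ D ξ₀ = (ξ - ξ₀)² + 2 r ξ₀`. Integrated against the bounded statistic `T`,
Cauchy–Schwarz bounds the first term by `M ‖ξ - ξ₀‖₂² ≤ 2M (‖r‖₂² + Δ² ‖D‖₂²) = O(Δ²)` and the
second by `2M ‖r‖₂ ‖ξ₀‖₂`, which is `o(Δ)` by `L²`-differentiability.
-/

section SquareIntegrable

variable {X : Type*} [MeasurableSpace X] {μ : Measure X} {u v g g₀ D T : X → ℝ} {M : ℝ}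

theorem integral_abs_mul_le_sqrt_mul_sqrt (hu : MemLp u 2 μ) (hv : MemLp v 2 μ) :
    ∫ x, |u x * v x| ∂μ ≤ √(∫ x, u x ^ 2 ∂μ) * √(∫ x, v x ^ 2 ∂μ) := by
  have h := integral_mul_norm_le_Lp_mul_Lq (μ := μ) Real.HolderConjugate.two_two
    (by simpa using hu) (by simpa using hv)
  simpa only [Real.norm_eq_abs, abs_mul, Real.rpow_two, sq_abs, Real.sqrt_eq_rpow] using h

theorem integral_sq_add_le (hu : MemLp u 2 μ) (hv : MemLp v 2 μ) :
    ∫ x, (u x + v x) ^ 2 ∂μ ≤ 2 * ∫ x, u x ^ 2 ∂μ + 2 * ∫ x, v x ^ 2 ∂μ := by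
  rw [← integral_const_mul, ← integral_const_mul,
    ← integral_add (hu.integrable_sq.const_mul 2) (hv.integrable_sq.const_mul 2)]
  refine integral_mono (hu.add hv).integrable_sq
    ((hu.integrable_sq.const_mul 2).add (hv.integrable_sq.const_mul 2)) fun x => ?_
  nlinarith [sq_nonneg (u x - v x)]

theorem abs_integral_mul_mul_le (hT : AEStronglyMeasurable T μ) (hTM : ∀ᵐ x ∂μ, |T x| ≤ M)
    (hM : 0 ≤ M) (hu : MemLp u 2 μ) (hv : MemLp v 2 μ) :
    |∫ x, T x * (u x * v x) ∂μ| ≤ M * (√(∫ x, u x ^ 2 ∂μ) * √(∫ x, v x ^ 2 ∂μ)) := by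
  have huv : Integrable (fun x => u x * v x) μ := hu.integrable_mul hv
  calc |∫ x, T x * (u x * v x) ∂μ|
      ≤ ∫ x, |T x * (u x * v x)| ∂μ := abs_integral_le_integral_abs
    _ ≤ ∫ x, M * |u x * v x| ∂μ := by
        refine integral_mono_ae (huv.bdd_mul hT hTM).abs (huv.abs.const_mul M) ?_
        filter_upwards [hTM] with x hx
        rw [abs_mul]
        exact mul_le_mul_of_nonneg_right hx (abs_nonneg _)
    _ = M * ∫ x, |u x * v x| ∂μ := integral_const_mul _ _
    _ ≤ _ := mul_le_mul_of_nonneg_left (integral_abs_mul_le_sqrt_mul_sqrt hu hv) hM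

theorem integral_mul_sq_sub_sub_eq (hg : MemLp g 2 μ) (hg₀ : MemLp g₀ 2 μ) (hD : MemLp D 2 μ)
    (hT : AEStronglyMeasurable T μ) (hTM : ∀ᵐ x ∂μ, |T x| ≤ M) (Δ : ℝ) :
    (∫ x, T x * g x ^ 2 ∂μ) - (∫ x, T x * g₀ x ^ 2 ∂μ) - Δ * (2 * ∫ x, D x * g₀ x * T x ∂μ)
      = (∫ x, T x * ((g x - g₀ x) * (g x - g₀ x)) ∂μ)
        + 2 * ∫ x, T x * ((g x - g₀ x - Δ * D x) * g₀ x) ∂μ := by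
  have hδ : MemLp (fun x => g x - g₀ x) 2 μ := hg.sub hg₀
  have hr : MemLp (fun x => g x - g₀ x - Δ * D x) 2 μ := hδ.sub (hD.const_mul Δ)
  have hTg : ∀ {w : X → ℝ}, MemLp w 2 μ → Integrable (fun x => T x * w x ^ 2) μ :=
    fun hw => hw.integrable_sq.bdd_mul hT hTM
  have hsub : Integrable (fun x => T x * g x ^ 2 - T x * g₀ x ^ 2) μ := (hTg hg).sub (hTg hg₀)
  have hTuv : ∀ {u v : X → ℝ}, MemLp u 2 μ → MemLp v 2 μ →
      Integrable (fun x => T x * (u x * v x)) μ :=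
    fun hu hv => (hu.integrable_mul hv).bdd_mul hT hTM
  have hDg₀T : Integrable (fun x => D x * g₀ x * T x) μ := (hD.integrable_mul hg₀).mul_bdd hT hTM
  have h : ∫ x, (T x * g x ^ 2 - T x * g₀ x ^ 2 - Δ * (2 * (D x * g₀ x * T x))) ∂μ
      = ∫ x, (T x * ((g x - g₀ x) * (g x - g₀ x))
        + 2 * (T x * ((g x - g₀ x - Δ * D x) * g₀ x))) ∂μ :=
    integral_congr_ae (ae_of_all _ fun x => by ring)
  rwa [integral_sub hsub ((hDg₀T.const_mul 2).const_mul Δ),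
    integral_sub (hTg hg) (hTg hg₀), integral_const_mul, integral_const_mul,
    integral_add (hTuv hδ hδ) ((hTuv hr hg₀).const_mul 2),
    integral_const_mul] at h

theorem abs_integral_mul_sq_sub_sub_le (hg : MemLp g 2 μ) (hg₀ : MemLp g₀ 2 μ)
    (hD : MemLp D 2 μ) (hT : AEStronglyMeasurable T μ) (hTM : ∀ᵐ x ∂μ, |T x| ≤ M) (hM : 0 ≤ M)
    (Δ : ℝ) :
    |(∫ x, T x * g x ^ 2 ∂μ) - (∫ x, T x * g₀ x ^ 2 ∂μ) - Δ * (2 * ∫ x, D x * g₀ x * T x ∂μ)|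
      ≤ M * (2 * ∫ x, (g x - g₀ x - Δ * D x) ^ 2 ∂μ + 2 * Δ ^ 2 * ∫ x, D x ^ 2 ∂μ)
        + 2 * M * (√(∫ x, (g x - g₀ x - Δ * D x) ^ 2 ∂μ) * √(∫ x, g₀ x ^ 2 ∂μ)) := by
  set r : X → ℝ := fun x => g x - g₀ x - Δ * D x
  have hr : MemLp r 2 μ := (hg.sub hg₀).sub (hD.const_mul Δ)
  have hδ : MemLp (fun x => g x - g₀ x) 2 μ := hg.sub hg₀
  have hδ_le : ∫ x, (g x - g₀ x) ^ 2 ∂μ ≤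
      2 * ∫ x, r x ^ 2 ∂μ + 2 * Δ ^ 2 * ∫ x, D x ^ 2 ∂μ := by
    have h := integral_sq_add_le hr (hD.const_mul Δ)
    simp only [r, sub_add_cancel, mul_pow, integral_const_mul] at h
    linarith
  have hδδ : |∫ x, T x * ((g x - g₀ x) * (g x - g₀ x)) ∂μ| ≤ M * ∫ x, (g x - g₀ x) ^ 2 ∂μ := by
    have h := abs_integral_mul_mul_le hT hTM hM hδ hδ
    rwa [Real.mul_self_sqrt (integral_nonneg fun x => sq_nonneg _)] at h
  rw [integral_mul_sq_sub_sub_eq hg hg₀ hD hT hTM Δ]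
  calc _ ≤ |∫ x, T x * ((g x - g₀ x) * (g x - g₀ x)) ∂μ|
          + 2 * |∫ x, T x * (r x * g₀ x) ∂μ| :=
        (abs_add_le _ _).trans_eq (by rw [abs_mul, abs_two])
    _ ≤ M * (2 * ∫ x, r x ^ 2 ∂μ + 2 * Δ ^ 2 * ∫ x, D x ^ 2 ∂μ)
          + 2 * (M * (√(∫ x, r x ^ 2 ∂μ) * √(∫ x, g₀ x ^ 2 ∂μ))) := by
        gcongr
        · exact hδδ.trans (mul_le_mul_of_nonneg_left hδ_le hM)
        · exact abs_integral_mul_mul_le hT hTM hM hr hg₀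
    _ = _ := by ring

theorem abs_slope_integral_mul_sq_sub_le (hg : MemLp g 2 μ) (hg₀ : MemLp g₀ 2 μ)
    (hD : MemLp D 2 μ) (hT : AEStronglyMeasurable T μ) (hTM : ∀ᵐ x ∂μ, |T x| ≤ M) (hM : 0 ≤ M)
    {Δ : ℝ} (hΔ : Δ ≠ 0) :
    |((∫ x, T x * g x ^ 2 ∂μ) - ∫ x, T x * g₀ x ^ 2 ∂μ) / Δ - 2 * ∫ x, D x * g₀ x * T x ∂μ|
      ≤ 2 * M * ((∫ x, (g x - g₀ x - Δ * D x) ^ 2 ∂μ) / Δ ^ 2 * |Δ| + (∫ x, D x ^ 2 ∂μ) * |Δ|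
        + √((∫ x, (g x - g₀ x - Δ * D x) ^ 2 ∂μ) / Δ ^ 2) * √(∫ x, g₀ x ^ 2 ∂μ)) := by
  have h := abs_integral_mul_sq_sub_sub_le hg hg₀ hD hT hTM hM Δ
  have hΔ' : 0 < |Δ| := abs_pos.2 hΔ
  set A := ∫ x, T x * g x ^ 2 ∂μ - ∫ x, T x * g₀ x ^ 2 ∂μ
  set L := ∫ x, D x * g₀ x * T x ∂μ
  rw [show A / Δ - 2 * L = (A - Δ * (2 * L)) / Δ by field_simp, abs_div, div_le_iff₀ hΔ',
    Real.sqrt_div' _ (sq_nonneg Δ), Real.sqrt_sq_eq_abs]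
  refine h.trans_eq ?_
  rw [← sq_abs Δ]
  field_simp

end SquareIntegrable

theorem stmt_0_general {X : Type*} [MeasurableSpace X] (μ : Measure X)
    (Θ : Set ℝ) (hΘ : IsOpen Θ) (θ₀ : ℝ) (hθ₀ : θ₀ ∈ Θ)
    (f : ℝ → X → ℝ)
    (hf_meas : Measurable (Function.uncurry f))
    (hf_nonneg : ∀ θ x, 0 ≤ f θ x)
    (hf_prob : ∀ θ ∈ Θ, ∫ x, f θ x ∂μ = 1)
    (D : X → ℝ) (hD : MemLp D 2 μ)
    (hdiff : Tendsto
      (fun θ => (∫ x, (Real.sqrt (f θ x) - Real.sqrt (f θ₀ x) - (θ - θ₀) * D x) ^ 2 ∂μ)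
        / (θ - θ₀) ^ 2) (𝓝[≠] θ₀) (𝓝 0))
    (T : X → ℝ) (hT_meas : Measurable T) (M : ℝ) (hT : ∀ᵐ x ∂μ, |T x| ≤ M) :
    HasDerivAt (fun θ => ∫ x, T x * f θ x ∂μ)
      (2 * ∫ x, D x * Real.sqrt (f θ₀ x) * T x ∂μ) θ₀ := by
  set ξ : ℝ → X → ℝ := fun θ x => √(f θ x)
  have hξ : ∀ θ ∈ Θ, MemLp (ξ θ) 2 μ := fun θ hθ => by
    refine (memLp_two_iff_integrable_sq (hf_meas.of_uncurry_left.sqrt).aestronglyMeasurable).2 ?_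
    simpa only [ξ, Real.sq_sqrt (hf_nonneg θ _)] using
      Integrable.of_integral_ne_zero ((hf_prob θ hθ).symm ▸ one_ne_zero)
  have hγ : ∀ θ, ∫ x, T x * f θ x ∂μ = ∫ x, T x * ξ θ x ^ 2 ∂μ := fun θ => by
    simp only [ξ, Real.sq_sqrt (hf_nonneg θ _)]
  have hTM : ∀ᵐ x ∂μ, |T x| ≤ |M| := hT.mono fun x hx => hx.trans (le_abs_self M)
  set q : ℝ → ℝ := fun θ => (∫ x, (ξ θ x - ξ θ₀ x - (θ - θ₀) * D x) ^ 2 ∂μ) / (θ - θ₀) ^ 2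
  have hbound : Tendsto (fun θ => 2 * |M| * (q θ * |θ - θ₀| + (∫ x, D x ^ 2 ∂μ) * |θ - θ₀|
      + √(q θ) * √(∫ x, ξ θ₀ x ^ 2 ∂μ))) (𝓝[≠] θ₀) (𝓝 0) := by
    have habs : Tendsto (fun θ => |θ - θ₀|) (𝓝[≠] θ₀) (𝓝 0) :=
      tendsto_nhdsWithin_of_tendsto_nhds
        ((continuous_sub_right θ₀).abs.tendsto' θ₀ 0 (by simp))
    simpa using (((hdiff.mul habs).add (habs.const_mul _)).add
      ((hdiff.sqrt).mul_const _)).const_mul (2 * |M|)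
  rw [hasDerivAt_iff_tendsto_slope, tendsto_iff_dist_tendsto_zero]
  refine squeeze_zero' (Eventually.of_forall fun _ => dist_nonneg) ?_ hbound
  filter_upwards [mem_nhdsWithin_of_mem_nhds (hΘ.mem_nhds hθ₀), self_mem_nhdsWithin]
    with θ hθ hne
  rw [Real.dist_eq, slope_def_field, hγ, hγ]
  exact abs_slope_integral_mul_sq_sub_le (hξ θ hθ) (hξ θ₀ hθ₀) hD
    hT_meas.aestronglyMeasurable hTM (abs_nonneg M) (sub_ne_zero.2 hne)

/-- differentiability of expectations, Pollard/Ibragimov–Hasminskii: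
If the μ-dominated model with densities `f θ` (square roots `ξ θ = √(f θ)`) is
differentiable in `L²(μ)` at `θ₀ ∈ Θ` with derivative `D`, then for every statistic `T`
bounded by `M` μ-a.s., the mean function `γ_T : θ ↦ ∫ T f_θ dμ` is differentiable at `θ₀`
with derivative `2 ∫ D ξ_{θ₀} T dμ`. -/
theorem stmt_0 {X : Type*} [MeasurableSpace X] (μ : Measure X) [SigmaFinite μ]
    (Θ : Set ℝ) (hΘ : IsOpen Θ) (θ₀ : ℝ) (hθ₀ : θ₀ ∈ Θ)
    (f : ℝ → X → ℝ)
    (hf_meas : Measurable (Function.uncurry f))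
    (hf_nonneg : ∀ θ x, 0 ≤ f θ x)
    (hf_prob : ∀ θ ∈ Θ, ∫ x, f θ x ∂μ = 1)
    (D : X → ℝ) (hD : MemLp D 2 μ)
    (hdiff : Tendsto
      (fun θ => (∫ x, (Real.sqrt (f θ x) - Real.sqrt (f θ₀ x) - (θ - θ₀) * D x) ^ 2 ∂μ)
        / (θ - θ₀) ^ 2) (𝓝[≠] θ₀) (𝓝 0))
    (T : X → ℝ) (hT_meas : Measurable T) (M : ℝ) (hT : ∀ᵐ x ∂μ, |T x| ≤ M) :
    HasDerivAt (fun θ => ∫ x, T x * f θ x ∂μ)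
      (2 * ∫ x, D x * Real.sqrt (f θ₀ x) * T x ∂μ) θ₀ :=
  stmt_0_general μ Θ hΘ θ₀ hθ₀ f hf_meas hf_nonneg hf_prob D hD hdiff T hT_meas M hT
end

section
/- Cramér–Rao bound for possibly biased statistics: if the μ-dominated model is differentiable in L²(μ) at θ₀ with Fisher information I(θ₀) = 4∫ ξ̇_{θ₀}² dμ > 0, and T is a bounded statistic with mean function γ_T(θ) = E_θ[T], then Var_{θ₀}(T) ≥ (γ'_T(θ₀))² / I(θ₀). -/
open MeasureTheory Filter Topology
open scoped ENNReal

/-!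
Write `ξ_θ = √f_θ`. Differentiability in `L²(μ)` says that the difference quotients
`(ξ_θ - ξ_{θ₀}) / (θ - θ₀)` tend to `D` in `L²`, hence also `ξ_θ → ξ_{θ₀}` in `L²`. Since
`f_θ - f_{θ₀} = (ξ_θ - ξ_{θ₀}) (ξ_θ + ξ_{θ₀})`, continuity of the `L²` inner product shows that for
every bounded `S` the map `θ ↦ ∫ S f_θ dμ` has derivative `2 ∫ S D ξ_{θ₀} dμ` at `θ₀`. For `S = 1`
this map is locally constant, so `∫ D ξ_{θ₀} dμ = 0`; therefore
`g = 2 ∫ (T - E_{θ₀} T) ξ_{θ₀} D dμ`, and Cauchy–Schwarz gives `g² ≤ 4 Var_{θ₀}(T) ∫ D² dμ`.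
-/

section

variable {X : Type*} [MeasurableSpace X] {μ : Measure X}

lemma integral_mul_eq_inner_toLp {u v : X → ℝ} (hu : MemLp u 2 μ) (hv : MemLp v 2 μ) :
    ∫ x, u x * v x ∂μ = inner ℝ (hu.toLp u) (hv.toLp v) := by
  rw [L2.inner_def]
  refine integral_congr_ae ?_
  filter_upwards [hu.coeFn_toLp, hv.coeFn_toLp] with x hux hvx
  simp [hux, hvx, mul_comm]

lemma sq_integral_mul_le {u v : X → ℝ} (hu : MemLp u 2 μ) (hv : MemLp v 2 μ) :
    (∫ x, u x * v x ∂μ) ^ 2 ≤ (∫ x, u x ^ 2 ∂μ) * ∫ x, v x ^ 2 ∂μ := by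
  simp only [sq, integral_mul_eq_inner_toLp hu hv, integral_mul_eq_inner_toLp hu hu,
    integral_mul_eq_inner_toLp hv hv]
  exact real_inner_mul_inner_self_le _ _

lemma abs_integral_mul_le {u v : X → ℝ} (hu : MemLp u 2 μ) (hv : MemLp v 2 μ) :
    |∫ x, u x * v x ∂μ| ≤ √(∫ x, u x ^ 2 ∂μ) * √(∫ x, v x ^ 2 ∂μ) := by
  rw [← Real.sqrt_mul (integral_nonneg fun x => sq_nonneg (u x))]
  exact Real.abs_le_sqrt (sq_integral_mul_le hu hv)

lemma memLp_two_sqrt {p : X → ℝ} (hp : Integrable p μ) (hp0 : 0 ≤ᵐ[μ] p) :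
    MemLp (fun x => √(p x)) 2 μ := by
  rw [memLp_two_iff_integrable_sq (Real.continuous_sqrt.comp_aestronglyMeasurable hp.1)]
  refine hp.congr ?_
  filter_upwards [hp0] with x hx
  exact (Real.sq_sqrt hx).symm

lemma MeasureTheory.MemLp.div_const {p : ℝ≥0∞} {f : X → ℝ} (hf : MemLp f p μ) (c : ℝ) :
    MemLp (fun x => f x / c) p μ := by
  simpa only [div_eq_mul_inv] using hf.mul_const c⁻¹

variable {ι : Type*} {l : Filter ι}

lemma tendsto_integral_mul {u v : ι → X → ℝ} {u₀ v₀ : X → ℝ}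
    (hu : ∀ᶠ i in l, MemLp (u i) 2 μ) (hv : ∀ᶠ i in l, MemLp (v i) 2 μ)
    (hu₀ : MemLp u₀ 2 μ) (hv₀ : MemLp v₀ 2 μ)
    (hu_lim : Tendsto (fun i => ∫ x, (u i x - u₀ x) ^ 2 ∂μ) l (𝓝 0))
    (hv_lim : Tendsto (fun i => ∫ x, (v i x - v₀ x) ^ 2 ∂μ) l (𝓝 0)) :
    Tendsto (fun i => ∫ x, u i x * v i x ∂μ) l (𝓝 (∫ x, u₀ x * v₀ x ∂μ)) := by
  set A := √(∫ x, u₀ x ^ 2 ∂μ)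
  set B := √(∫ x, v₀ x ^ 2 ∂μ)
  set a := fun i => √(∫ x, (u i x - u₀ x) ^ 2 ∂μ)
  set b := fun i => √(∫ x, (v i x - v₀ x) ^ 2 ∂μ)
  have hbound : ∀ᶠ i in l,
      ‖∫ x, u i x * v i x ∂μ - ∫ x, u₀ x * v₀ x ∂μ‖ ≤ a i * b i + a i * B + A * b i := by
    filter_upwards [hu, hv] with i hui hvi
    have hmul : ∀ {w z : X → ℝ}, MemLp w 2 μ → MemLp z 2 μ →
        Integrable (fun x => w x * z x) μ := fun hw hz => hw.integrable_mul hz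
    have hdu : MemLp (fun x => u i x - u₀ x) 2 μ := hui.sub hu₀
    have hdv : MemLp (fun x => v i x - v₀ x) 2 μ := hvi.sub hv₀
    have hsplit : ∫ x, u i x * v i x ∂μ - ∫ x, u₀ x * v₀ x ∂μ
        = ∫ x, (u i x - u₀ x) * (v i x - v₀ x) ∂μ + ∫ x, (u i x - u₀ x) * v₀ x ∂μ
          + ∫ x, u₀ x * (v i x - v₀ x) ∂μ := by
      rw [← integral_sub (hmul hui hvi) (hmul hu₀ hv₀),
        ← integral_add (hmul hdu hdv) (hmul hdu hv₀),
        ← integral_add _ (hmul hu₀ hdv)]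
      · congr 1 with x
        ring
      · exact (hmul hdu hdv).add (hmul hdu hv₀)
    rw [hsplit, Real.norm_eq_abs]
    refine (abs_add_le _ _).trans (add_le_add ((abs_add_le _ _).trans (add_le_add ?_ ?_)) ?_)
    · exact abs_integral_mul_le hdu hdv
    · exact abs_integral_mul_le hdu hv₀
    · exact abs_integral_mul_le hu₀ hdv
  have ha : Tendsto a l (𝓝 0) := by simpa using hu_lim.sqrt
  have hb : Tendsto b l (𝓝 0) := by simpa using hv_lim.sqrt
  rw [tendsto_iff_norm_sub_tendsto_zero]
  refine squeeze_zero' (Eventually.of_forall fun i => norm_nonneg _) hbound ?_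
  simpa using ((ha.mul hb).add (ha.mul_const B)).add (hb.const_mul A)

lemma tendsto_integral_sq_mul_sub {S : X → ℝ} {M : ℝ} (hS : ∀ᵐ x ∂μ, |S x| ≤ M)
    {u : ι → X → ℝ} {u₀ : X → ℝ}
    (hu : ∀ᶠ i in l, Integrable (fun x => (u i x - u₀ x) ^ 2) μ)
    (hu_lim : Tendsto (fun i => ∫ x, (u i x - u₀ x) ^ 2 ∂μ) l (𝓝 0)) :
    Tendsto (fun i => ∫ x, (S x * u i x - S x * u₀ x) ^ 2 ∂μ) l (𝓝 0) := by
  refine squeeze_zero' (Eventually.of_forall fun i => integral_nonneg fun x => sq_nonneg _) ?_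
    (by simpa using hu_lim.const_mul (M ^ 2))
  filter_upwards [hu] with i hui
  rw [← integral_const_mul]
  refine integral_mono_of_nonneg (Eventually.of_forall fun x => sq_nonneg _)
    (hui.const_mul _) ?_
  filter_upwards [hS] with x hx
  rw [← mul_sub, mul_pow, ← sq_abs (S x)]
  exact mul_le_mul_of_nonneg_right (pow_le_pow_left₀ (abs_nonneg _) hx 2) (sq_nonneg _)

lemma tendsto_integral_sq_slope_sub {ξ : ℝ → X → ℝ} {D : X → ℝ} {θ₀ : ℝ}
    (hdiff : Tendsto (fun θ => (∫ x, (ξ θ x - ξ θ₀ x - (θ - θ₀) * D x) ^ 2 ∂μ) / (θ - θ₀) ^ 2)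
      (𝓝[≠] θ₀) (𝓝 0)) :
    Tendsto (fun θ => ∫ x, ((ξ θ x - ξ θ₀ x) / (θ - θ₀) - D x) ^ 2 ∂μ) (𝓝[≠] θ₀) (𝓝 0) := by
  refine hdiff.congr' ?_
  filter_upwards [self_mem_nhdsWithin] with θ hne
  have hθ : θ - θ₀ ≠ 0 := sub_ne_zero.mpr hne
  rw [← integral_div]
  congr 1 with x
  field_simp

lemma tendsto_integral_sq_sub_of_slope {ξ : ℝ → X → ℝ} {D : X → ℝ} {θ₀ : ℝ}
    (hξ : ∀ᶠ θ in 𝓝[≠] θ₀, MemLp (ξ θ) 2 μ) (hξ₀ : MemLp (ξ θ₀) 2 μ) (hD : MemLp D 2 μ)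
    (hslope : Tendsto (fun θ => ∫ x, ((ξ θ x - ξ θ₀ x) / (θ - θ₀) - D x) ^ 2 ∂μ)
      (𝓝[≠] θ₀) (𝓝 0)) :
    Tendsto (fun θ => ∫ x, (ξ θ x - ξ θ₀ x) ^ 2 ∂μ) (𝓝[≠] θ₀) (𝓝 0) := by
  have hq : ∀ᶠ θ in 𝓝[≠] θ₀, MemLp (fun x => (ξ θ x - ξ θ₀ x) / (θ - θ₀)) 2 μ :=
    hξ.mono fun θ hθ => (hθ.sub hξ₀).div_const _
  have hsq : Tendsto (fun θ => ∫ x, (ξ θ x - ξ θ₀ x) / (θ - θ₀) * ((ξ θ x - ξ θ₀ x) / (θ - θ₀)) ∂μ)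
      (𝓝[≠] θ₀) (𝓝 (∫ x, D x * D x ∂μ)) :=
    tendsto_integral_mul hq hq hD hD hslope hslope
  have hdist : Tendsto (fun θ : ℝ => (θ - θ₀) ^ 2) (𝓝[≠] θ₀) (𝓝 0) :=
    tendsto_nhdsWithin_of_tendsto_nhds
      (by simpa using (show Continuous fun θ : ℝ => (θ - θ₀) ^ 2 by fun_prop).tendsto θ₀)
  have hlim : Tendsto (fun θ => (θ - θ₀) ^ 2 *
      ∫ x, (ξ θ x - ξ θ₀ x) / (θ - θ₀) * ((ξ θ x - ξ θ₀ x) / (θ - θ₀)) ∂μ) (𝓝[≠] θ₀) (𝓝 0) := by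
    simpa using hdist.mul hsq
  refine hlim.congr' ?_
  filter_upwards [self_mem_nhdsWithin] with θ hne
  have hθ : θ - θ₀ ≠ 0 := sub_ne_zero.mpr hne
  rw [← integral_const_mul]
  congr 1 with x
  field_simp

lemma hasDerivAt_integral_mul_of_L2_diff {f : ℝ → X → ℝ} {D : X → ℝ} {θ₀ : ℝ}
    (hf_nonneg : ∀ θ x, 0 ≤ f θ x) (hf_int : ∀ᶠ θ in 𝓝 θ₀, Integrable (f θ) μ)
    (hD : MemLp D 2 μ)
    (hdiff : Tendsto
      (fun θ => (∫ x, (√(f θ x) - √(f θ₀ x) - (θ - θ₀) * D x) ^ 2 ∂μ) / (θ - θ₀) ^ 2)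
      (𝓝[≠] θ₀) (𝓝 0))
    {S : X → ℝ} {M : ℝ} (hS_meas : AEStronglyMeasurable S μ) (hS : ∀ᵐ x ∂μ, |S x| ≤ M) :
    HasDerivAt (fun θ => ∫ x, S x * f θ x ∂μ) (2 * ∫ x, S x * D x * √(f θ₀ x) ∂μ) θ₀ := by
  have hS_norm : ∀ᵐ x ∂μ, ‖S x‖ ≤ M := by simpa using hS
  have hS_top : MemLp S ∞ μ := memLp_top_of_bound hS_meas M hS_norm
  have hnear : ∀ᶠ θ in 𝓝[≠] θ₀, Integrable (f θ) μ ∧ θ ≠ θ₀ :=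
    (eventually_nhdsWithin_of_eventually_nhds hf_int).and self_mem_nhdsWithin
  have hf₀ : Integrable (f θ₀) μ := hf_int.self_of_nhds
  have hξ : ∀ᶠ θ in 𝓝[≠] θ₀, MemLp (fun x => √(f θ x)) 2 μ :=
    hnear.mono fun θ h => memLp_two_sqrt h.1 (ae_of_all _ (hf_nonneg θ))
  have hξ₀ : MemLp (fun x => √(f θ₀ x)) 2 μ := memLp_two_sqrt hf₀ (ae_of_all _ (hf_nonneg θ₀))
  have hslope := tendsto_integral_sq_slope_sub (ξ := fun θ x => √(f θ x)) hdiff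
  have hq : ∀ᶠ θ in 𝓝[≠] θ₀, MemLp (fun x => (√(f θ x) - √(f θ₀ x)) / (θ - θ₀)) 2 μ :=
    hξ.mono fun θ hθ => (hθ.sub hξ₀).div_const _
  have hprod := tendsto_integral_mul
    (u := fun θ x => S x * ((√(f θ x) - √(f θ₀ x)) / (θ - θ₀)))
    (v := fun θ x => √(f θ x) + √(f θ₀ x)) (u₀ := fun x => S x * D x)
    (v₀ := fun x => √(f θ₀ x) + √(f θ₀ x))
    (hq.mono fun θ h => h.mul' hS_top) (hξ.mono fun θ h => h.add hξ₀)
    (hD.mul' hS_top) (hξ₀.add hξ₀)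
    (tendsto_integral_sq_mul_sub hS (hq.mono fun θ h => (h.sub hD).integrable_sq) hslope)
    (by simpa only [add_sub_add_right_eq_sub] using
      tendsto_integral_sq_sub_of_slope hξ hξ₀ hD hslope)
  have hlim : ∫ x, S x * D x * (√(f θ₀ x) + √(f θ₀ x)) ∂μ = 2 * ∫ x, S x * D x * √(f θ₀ x) ∂μ := by
    rw [← integral_const_mul]
    congr 1 with x
    ring
  rw [hasDerivAt_iff_tendsto_slope, slope_fun_def_field, ← hlim]
  refine hprod.congr' ?_
  filter_upwards [hnear] with θ ⟨hfθ, hne⟩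
  have hθ : θ - θ₀ ≠ 0 := sub_ne_zero.mpr hne
  rw [← integral_sub (hfθ.bdd_mul hS_meas hS_norm) (hf₀.bdd_mul hS_meas hS_norm),
    ← integral_div]
  congr 1 with x
  have h := Real.sq_sqrt (hf_nonneg θ x)
  have h₀ := Real.sq_sqrt (hf_nonneg θ₀ x)
  field_simp
  linear_combination S x * h - S x * h₀

lemma integral_mul_sqrt_eq_zero_of_L2_diff {f : ℝ → X → ℝ} {D : X → ℝ} {θ₀ : ℝ}
    (hf_nonneg : ∀ θ x, 0 ≤ f θ x) (hf_prob : ∀ᶠ θ in 𝓝 θ₀, ∫ x, f θ x ∂μ = 1)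
    (hD : MemLp D 2 μ)
    (hdiff : Tendsto
      (fun θ => (∫ x, (√(f θ x) - √(f θ₀ x) - (θ - θ₀) * D x) ^ 2 ∂μ) / (θ - θ₀) ^ 2)
      (𝓝[≠] θ₀) (𝓝 0)) :
    ∫ x, D x * √(f θ₀ x) ∂μ = 0 := by
  have hf_int : ∀ᶠ θ in 𝓝 θ₀, Integrable (f θ) μ :=
    hf_prob.mono fun θ h => Integrable.of_integral_ne_zero (by simp [h])
  have hderiv := hasDerivAt_integral_mul_of_L2_diff hf_nonneg hf_int hD hdiff
    (S := fun _ => 1) aestronglyMeasurable_const (ae_of_all _ fun _ => (abs_one).le)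
  have hconst : HasDerivAt (fun θ => ∫ x, 1 * f θ x ∂μ) 0 θ₀ :=
    (hasDerivAt_const θ₀ 1).congr_of_eventuallyEq (hf_prob.mono fun θ h => by simpa using h)
  simpa using hderiv.unique hconst

end

theorem stmt_3_general {X : Type*} [MeasurableSpace X] (μ : Measure X)
    (Θ : Set ℝ) (hΘ : IsOpen Θ) (θ₀ : ℝ) (hθ₀ : θ₀ ∈ Θ)
    (f : ℝ → X → ℝ)
    (hf_nonneg : ∀ θ x, 0 ≤ f θ x)
    (hf_prob : ∀ θ ∈ Θ, ∫ x, f θ x ∂μ = 1)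
    (D : X → ℝ) (hD : MemLp D 2 μ)
    (hdiff : Tendsto
      (fun θ => (∫ x, (Real.sqrt (f θ x) - Real.sqrt (f θ₀ x) - (θ - θ₀) * D x) ^ 2 ∂μ)
        / (θ - θ₀) ^ 2) (𝓝[≠] θ₀) (𝓝 0))
    (T : X → ℝ) (hT_meas : Measurable T) (M : ℝ) (hT : ∀ᵐ x ∂μ, |T x| ≤ M)
    (g : ℝ) (hderiv : HasDerivAt (fun θ => ∫ x, T x * f θ x ∂μ) g θ₀) :
    (∫ x, (T x - ∫ y, T y * f θ₀ y ∂μ) ^ 2 * f θ₀ x ∂μ)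
      ≥ g ^ 2 / (4 * ∫ x, D x ^ 2 ∂μ) := by
  have hf_prob₀ : ∀ᶠ θ in 𝓝 θ₀, ∫ x, f θ x ∂μ = 1 := (hΘ.eventually_mem hθ₀).mono hf_prob
  have hf_int : ∀ᶠ θ in 𝓝 θ₀, Integrable (f θ) μ :=
    hf_prob₀.mono fun θ h => Integrable.of_integral_ne_zero (by simp [h])
  have hξ₀ : MemLp (fun x => √(f θ₀ x)) 2 μ :=
    memLp_two_sqrt hf_int.self_of_nhds (ae_of_all _ (hf_nonneg θ₀))
  have hT_top : MemLp T ∞ μ := memLp_top_of_bound hT_meas.aestronglyMeasurable M (by simpa using hT)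
  set m := ∫ y, T y * f θ₀ y ∂μ
  have hg : g = 2 * ∫ x, T x * D x * √(f θ₀ x) ∂μ :=
    hderiv.unique (hasDerivAt_integral_mul_of_L2_diff hf_nonneg hf_int hD hdiff
      hT_meas.aestronglyMeasurable hT)
  have hcentered : ∫ x, (T x - m) * √(f θ₀ x) * D x ∂μ = ∫ x, T x * D x * √(f θ₀ x) ∂μ := by
    have hTD : Integrable (fun x => T x * D x * √(f θ₀ x)) μ :=
      (hD.mul' hT_top : MemLp (fun x => T x * D x) 2 μ).integrable_mul hξ₀
    have hmD : Integrable (fun x => m * (D x * √(f θ₀ x))) μ :=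
      (hD.integrable_mul hξ₀).const_mul m
    calc ∫ x, (T x - m) * √(f θ₀ x) * D x ∂μ
        = ∫ x, T x * D x * √(f θ₀ x) ∂μ - m * ∫ x, D x * √(f θ₀ x) ∂μ := by
          rw [← integral_const_mul, ← integral_sub hTD hmD]
          congr 1 with x
          ring
      _ = ∫ x, T x * D x * √(f θ₀ x) ∂μ := by
          rw [integral_mul_sqrt_eq_zero_of_L2_diff hf_nonneg hf_prob₀ hD hdiff, mul_zero,
            sub_zero]
  have hvar : ∫ x, ((T x - m) * √(f θ₀ x)) ^ 2 ∂μ = ∫ x, (T x - m) ^ 2 * f θ₀ x ∂μ := by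
    congr 1 with x
    rw [mul_pow, Real.sq_sqrt (hf_nonneg θ₀ x)]
  have hTm : MemLp (fun x => (T x - m) * √(f θ₀ x)) 2 μ :=
    hξ₀.mul' (hT_top.sub (memLp_top_const m))
  have hcs := sq_integral_mul_le hTm hD
  rw [hvar, hcentered] at hcs
  refine div_le_of_le_mul₀ (by positivity) (integral_nonneg fun x => ?_) ?_
  · exact mul_nonneg (sq_nonneg _) (hf_nonneg θ₀ x)
  · rw [hg]
    linarith

/-- Cramér–Rao bound for possibly biased statistics:
if the μ-dominated model is differentiable in `L²(μ)` at `θ₀` with Fisher information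
`I(θ₀) = 4∫ ξ̇² dμ > 0`, and `T` is a bounded statistic with mean function
`γ_T(θ) = E_θ[T]`, then `Var_{θ₀}(T) ≥ (γ'_T(θ₀))² / I(θ₀)`. -/
theorem stmt_3 {X : Type*} [MeasurableSpace X] (μ : Measure X) [SigmaFinite μ]
    (Θ : Set ℝ) (hΘ : IsOpen Θ) (θ₀ : ℝ) (hθ₀ : θ₀ ∈ Θ)
    (f : ℝ → X → ℝ)
    (hf_meas : Measurable (Function.uncurry f))
    (hf_nonneg : ∀ θ x, 0 ≤ f θ x)
    (hf_prob : ∀ θ ∈ Θ, ∫ x, f θ x ∂μ = 1)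
    (D : X → ℝ) (hD : MemLp D 2 μ)
    (hdiff : Tendsto
      (fun θ => (∫ x, (Real.sqrt (f θ x) - Real.sqrt (f θ₀ x) - (θ - θ₀) * D x) ^ 2 ∂μ)
        / (θ - θ₀) ^ 2) (𝓝[≠] θ₀) (𝓝 0))
    (hI : 0 < 4 * ∫ x, D x ^ 2 ∂μ)
    (T : X → ℝ) (hT_meas : Measurable T) (M : ℝ) (hT : ∀ᵐ x ∂μ, |T x| ≤ M)
    (g : ℝ) (hderiv : HasDerivAt (fun θ => ∫ x, T x * f θ x ∂μ) g θ₀) :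
    (∫ x, (T x - ∫ y, T y * f θ₀ y ∂μ) ^ 2 * f θ₀ x ∂μ)
      ≥ g ^ 2 / (4 * ∫ x, D x ^ 2 ∂μ) :=
  stmt_3_general μ Θ hΘ θ₀ hθ₀ f hf_nonneg hf_prob D hD hdiff T hT_meas M hT g hderiv
end

section
/- Multivariate Stokes-type lemma (Lemma on vanishing integral of a partial derivative): let D ⊆ ℝ^d be open, φ : D → ℝ nice (i.e., absolutely continuous in each coordinate for a.e. values of the other coordinates), with ∫_D |φ| dm < ∞ and ∫_D |∂_i φ| dm < ∞ for a fixed coordinate i, and suppose φ(u) → 0 as u approaches any finite-norm boundary point of D along the i-th canonical direction. Let S be open such that for a.e. u_{−i}, φ(u_i, u_{−i}) → 0 as u_i approaches a boundary point of S interior to the slice D(u_{−i}). Then ∫_{D ∩ S} ∂_i φ dm = 0. -/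
/-!
Slice along the `i`-th coordinate. On almost every line the slice of `D ∩ S` is open, hence the
countable disjoint union of its connected components, which are open intervals, and it suffices
that `∂ᵢφ` integrates to zero over each of them. On such an interval, `φ d - φ c` is the integral
of `∂ᵢφ` over `[c, d]`, and `φ` tends to `0` at both ends: at a finite end, which lies on the
frontier of the slice of `D` or of `S`, by the boundary hypotheses; at an infinite end, because
`φ` has a limit there (`∂ᵢφ` is integrable) and is itself integrable, so the limit vanishes.
-/

open MeasureTheory Filter Topology Set

theorem exists_seq_eventually_gt_tendsto_zero {C : Set ℝ} {f g : ℝ → ℝ}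
    (hC : IsOpen C) (hCc : C.OrdConnected) (hne : C.Nonempty)
    (hf : IntegrableOn f C) (hg : IntegrableOn g C)
    (hFTC : ∀ a ∈ C, ∀ b ∈ C, a ≤ b → f b - f a = ∫ t in a..b, g t)
    (hbd : ∀ t₀ ∈ frontier C, Tendsto f (𝓝[C] t₀) (𝓝 0)) :
    ∃ u : ℕ → ℝ, (∀ n, u n ∈ C) ∧ (∀ t ∈ C, ∀ᶠ n in atTop, t < u n) ∧
      Tendsto (f ∘ u) atTop (𝓝 0) := by
  by_cases hbdd : BddAbove C
  · obtain ⟨u, -, hu, huC⟩ := exists_seq_tendsto_sSup hne hbdd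
    have hsup : sSup C ∉ C := fun h => by
      obtain ⟨y, hy, hyC⟩ := Filter.Eventually.exists_gt (hC.mem_nhds h)
      exact (le_csSup hbdd hyC).not_gt hy
    have hfr : sSup C ∈ frontier C := by
      rw [hC.frontier_eq]
      exact ⟨csSup_mem_closure hne hbdd, hsup⟩
    refine ⟨u, huC, fun t ht => hu.eventually (lt_mem_nhds ?_),
      (hbd _ hfr).comp (tendsto_nhdsWithin_iff.2 ⟨hu, .of_forall huC⟩)⟩
    exact (le_csSup hbdd ht).lt_of_ne (ne_of_mem_of_not_mem ht hsup)
  · obtain ⟨x₀, hx₀⟩ := hne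
    have hIoi : Ioi x₀ ⊆ C := fun x hx => by
      obtain ⟨y, hyC, hxy⟩ := not_bddAbove_iff.1 hbdd x
      exact hCc.out hx₀ hyC ⟨hx.le, hxy.le⟩
    have hlim : Tendsto f atTop (𝓝 (f x₀ + ∫ t in Ioi x₀, g t)) := by
      refine (tendsto_const_nhds.add (intervalIntegral_tendsto_integral_Ioi x₀
        (hg.mono_set hIoi) tendsto_id)).congr' ?_
      filter_upwards [eventually_gt_atTop x₀] with x hx
      rw [id, ← hFTC x₀ hx₀ x (hIoi hx) hx.le, add_sub_cancel]
    have hzero : f x₀ + ∫ t in Ioi x₀, g t = 0 := by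
      refine IntegrableAtFilter.eq_zero_of_tendsto ⟨Ioi x₀, Ioi_mem_atTop x₀, hf.mono_set hIoi⟩
        (fun s hs => ?_) hlim
      obtain ⟨b, hb⟩ := mem_atTop_sets.1 hs
      rw [← top_le_iff, ← Real.volume_Ici (a := b)]
      exact measure_mono hb
    have hu : Tendsto (fun n : ℕ => x₀ + 1 + n) atTop atTop :=
      tendsto_atTop_add_const_left _ _ tendsto_natCast_atTop_atTop
    refine ⟨fun n => x₀ + 1 + n, fun n => hIoi ?_, fun t _ => hu.eventually_gt_atTop t, ?_⟩
    · simp only [mem_Ioi]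
      linarith [n.cast_nonneg (α := ℝ)]
    · exact hzero ▸ hlim.comp hu

theorem exists_seq_eventually_lt_tendsto_zero {C : Set ℝ} {f g : ℝ → ℝ}
    (hC : IsOpen C) (hCc : C.OrdConnected) (hne : C.Nonempty)
    (hf : IntegrableOn f C) (hg : IntegrableOn g C)
    (hFTC : ∀ a ∈ C, ∀ b ∈ C, a ≤ b → f b - f a = ∫ t in a..b, g t)
    (hbd : ∀ t₀ ∈ frontier C, Tendsto f (𝓝[C] t₀) (𝓝 0)) :
    ∃ u : ℕ → ℝ, (∀ n, u n ∈ C) ∧ (∀ t ∈ C, ∀ᶠ n in atTop, u n < t) ∧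
      Tendsto (f ∘ u) atTop (𝓝 0) := by
  have hneg : MeasurePreserving (fun t : ℝ => -t) := Measure.measurePreserving_neg volume
  have hemb : MeasurableEmbedding (fun t : ℝ => -t) := (Homeomorph.neg ℝ).measurableEmbedding
  obtain ⟨u, huC, hu, hfu⟩ := exists_seq_eventually_gt_tendsto_zero (C := (fun t => -t) ⁻¹' C)
    (f := fun t => f (-t)) (g := fun t => -g (-t)) (hC.preimage continuous_neg)
    ⟨fun a ha b hb t ht => hCc.out hb ha ⟨neg_le_neg ht.2, neg_le_neg ht.1⟩⟩
    (let ⟨x, hx⟩ := hne; ⟨-x, by simpa using hx⟩)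
    ((hneg.integrableOn_comp_preimage hemb).2 hf)
    ((hneg.integrableOn_comp_preimage hemb).2 hg).neg
    (fun a ha b hb hab => by
      rw [intervalIntegral.integral_neg, intervalIntegral.integral_comp_neg,
        ← hFTC _ hb _ ha (neg_le_neg hab)]
      ring)
    (fun t₀ ht₀ => (hbd _ (continuous_neg.frontier_preimage_subset C ht₀)).comp
      (continuous_neg.continuousWithinAt.tendsto_nhdsWithin fun x hx => hx))
  exact ⟨fun n => -u n, huC, fun t ht => (hu (-t) (by simpa using ht)).mono fun n h => by linarith,
    hfu⟩

theorem setIntegral_eq_zero_of_ordConnected {C : Set ℝ} {f g : ℝ → ℝ}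
    (hC : IsOpen C) (hCc : C.OrdConnected) (hf : IntegrableOn f C) (hg : IntegrableOn g C)
    (hFTC : ∀ a ∈ C, ∀ b ∈ C, a ≤ b → f b - f a = ∫ t in a..b, g t)
    (hbd : ∀ t₀ ∈ frontier C, Tendsto f (𝓝[C] t₀) (𝓝 0)) :
    ∫ t in C, g t = 0 := by
  rcases C.eq_empty_or_nonempty with rfl | hne
  · simp
  obtain ⟨u, huC, hu, hfu⟩ := exists_seq_eventually_gt_tendsto_zero hC hCc hne hf hg hFTC hbd
  obtain ⟨v, hvC, hv, hfv⟩ := exists_seq_eventually_lt_tendsto_zero hC hCc hne hf hg hFTC hbd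
  have hcover : AECover (volume.restrict C) atTop fun n => Ioc (v n) (u n) :=
    ⟨(ae_restrict_iff' hC.measurableSet).2 (ae_of_all _ fun t ht =>
      ((hv t ht).and (hu t ht)).mono fun n h => ⟨h.1, h.2.le⟩), fun n => measurableSet_Ioc⟩
  have hlim : Tendsto (fun n => f (u n) - f (v n)) atTop (𝓝 0) := by
    simpa using hfu.sub hfv
  refine hcover.integral_eq_of_tendsto 0 hg (hlim.congr' ?_)
  obtain ⟨x₀, hx₀⟩ := hne
  filter_upwards [(hv x₀ hx₀).and (hu x₀ hx₀)] with n hn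
  have hvu : v n ≤ u n := hn.1.le.trans hn.2.le
  rw [Measure.restrict_restrict_of_subset (Ioc_subset_Icc_self.trans (hCc.out (hvC n) (huC n))),
    ← intervalIntegral.integral_of_le hvu, hFTC _ (hvC n) _ (huC n) hvu]

theorem IsOpen.notMem_of_mem_frontier_connectedComponentIn {X : Type*} [TopologicalSpace X]
    [LocallyConnectedSpace X] {U : Set X} (hU : IsOpen U) {x y : X}
    (hy : y ∈ frontier (connectedComponentIn U x)) : y ∉ U := by
  intro hyU
  obtain ⟨z, hzy, hzx⟩ := mem_closure_iff.1 hy.1 _ hU.connectedComponentIn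
    (mem_connectedComponentIn hyU)
  have hxy : connectedComponentIn U y = connectedComponentIn U x :=
    (connectedComponentIn_eq hzy).trans (connectedComponentIn_eq hzx).symm
  apply hy.2
  rw [hU.connectedComponentIn.interior_eq, ← hxy]
  exact mem_connectedComponentIn hyU

theorem setIntegral_eq_zero_of_forall_connectedComponentIn {X E : Type*} [TopologicalSpace X]
    [LocallyConnectedSpace X] [TopologicalSpace.SeparableSpace X] [MeasurableSpace X]
    [OpensMeasurableSpace X] [NormedAddCommGroup E] [NormedSpace ℝ E] {μ : Measure X}
    {U : Set X} {g : X → E} (hU : IsOpen U) (hg : IntegrableOn g U μ)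
    (h : ∀ x ∈ U, ∫ t in connectedComponentIn U x, g t ∂μ = 0) :
    ∫ t in U, g t ∂μ = 0 := by
  set 𝒞 := connectedComponentIn U '' U
  have hopen : ∀ c ∈ 𝒞, IsOpen c := by
    rintro _ ⟨x, -, rfl⟩
    exact hU.connectedComponentIn
  have hdisj : 𝒞.PairwiseDisjoint id := by
    rintro _ ⟨x, -, rfl⟩ _ ⟨y, -, rfl⟩ hne
    exact disjoint_left.2 fun z hzx hzy =>
      hne ((connectedComponentIn_eq hzx).trans (connectedComponentIn_eq hzy).symm)
  have : Countable 𝒞 := (hdisj.countable_of_isOpen hopen (by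
    rintro _ ⟨x, hx, rfl⟩
    exact ⟨x, mem_connectedComponentIn hx⟩)).to_subtype
  have hU𝒞 : U = ⋃ c : 𝒞, (c : Set X) := by
    refine (subset_antisymm (fun x hx => ?_) (iUnion_subset fun c => ?_))
    · exact mem_iUnion.2 ⟨⟨_, x, hx, rfl⟩, mem_connectedComponentIn hx⟩
    · obtain ⟨_, x, -, rfl⟩ := c
      exact connectedComponentIn_subset U x
  rw [hU𝒞, integral_iUnion (s := fun c : 𝒞 => (c : Set X)) (fun c => (hopen c c.2).measurableSet)
    (fun c c' hcc' => hdisj c.2 c'.2 (Subtype.coe_injective.ne hcc')) (hU𝒞 ▸ hg)]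
  have hzero : ∀ c : 𝒞, ∫ t in (c : Set X), g t ∂μ = 0 := by
    rintro ⟨_, x, hx, rfl⟩
    exact h x hx
  simp only [hzero, tsum_zero]

theorem setIntegral_inter_eq_zero_of_tendsto_frontier {A B : Set ℝ} {f g : ℝ → ℝ}
    (hA : IsOpen A) (hB : IsOpen B) (hf : IntegrableOn f A) (hg : IntegrableOn g A)
    (hFTC : ∀ a b, a ≤ b → Icc a b ⊆ A → f b - f a = ∫ t in a..b, g t)
    (hbdA : ∀ t₀ ∈ frontier A, Tendsto f (𝓝[A] t₀) (𝓝 0))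
    (hbdB : ∀ t₀ ∈ frontier B, t₀ ∈ A → Tendsto f (𝓝[A ∩ B] t₀) (𝓝 0)) :
    ∫ t in A ∩ B, g t = 0 := by
  have hU := hA.inter hB
  refine setIntegral_eq_zero_of_forall_connectedComponentIn hU (hg.mono_set inter_subset_left)
    fun x _ => ?_
  have hCU : connectedComponentIn (A ∩ B) x ⊆ A ∩ B := connectedComponentIn_subset _ _
  have hCA := hCU.trans inter_subset_left
  have hCc : (connectedComponentIn (A ∩ B) x).OrdConnected :=
    isPreconnected_connectedComponentIn.ordConnected
  refine setIntegral_eq_zero_of_ordConnected hU.connectedComponentIn hCc (hf.mono_set hCA)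
    (hg.mono_set hCA) (fun a ha b hb hab => hFTC a b hab ((hCc.out ha hb).trans hCA))
    fun t₀ ht₀ => ?_
  have ht₀U : t₀ ∉ A ∩ B := hU.notMem_of_mem_frontier_connectedComponentIn ht₀
  have ht₀cl : t₀ ∈ closure (A ∩ B) := closure_mono hCU ht₀.1
  by_cases ht₀A : t₀ ∈ A
  · have ht₀B : t₀ ∈ frontier B := by
      rw [hB.frontier_eq]
      exact ⟨closure_mono inter_subset_right ht₀cl, fun h => ht₀U ⟨ht₀A, h⟩⟩
    exact (hbdB t₀ ht₀B ht₀A).mono_left (nhdsWithin_mono _ hCU)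
  · have ht₀A' : t₀ ∈ frontier A := by
      rw [hA.frontier_eq]
      exact ⟨closure_mono inter_subset_left ht₀cl, ht₀A⟩
    exact (hbdA t₀ ht₀A').mono_left (nhdsWithin_mono _ hCA)

section CoordLine

variable {n : ℕ} (i : Fin (n + 1))

def coordLine (y : Fin n → ℝ) (t : ℝ) : Fin (n + 1) → ℝ :=
  Fin.insertNth i t y

theorem update_coordLine (y : Fin n → ℝ) (t s : ℝ) :
    Function.update (coordLine i y t) i s = coordLine i y s :=
  Fin.update_insertNth (α := fun _ => ℝ) i t s y

theorem continuous_coordLine (y : Fin n → ℝ) : Continuous (coordLine i y) :=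
  Continuous.finInsertNth (A := fun _ => ℝ) i continuous_id continuous_const

theorem ae_ae_coordLine_of_ae {P : (Fin (n + 1) → ℝ) → Prop} (h : ∀ᵐ u, P u) :
    ∀ᵐ y : Fin n → ℝ, ∀ᵐ t : ℝ, P (coordLine i y t) := by
  have hmp := (volume_preserving_piFinSuccAbove (fun _ : Fin (n + 1) => ℝ) i).symm
  exact Measure.ae_ae_of_ae_prod
    (Measure.measurePreserving_swap.quasiMeasurePreserving.ae (hmp.quasiMeasurePreserving.ae h))

variable {E : Type*} [NormedAddCommGroup E] {F : (Fin (n + 1) → ℝ) → E} {s : Set (Fin (n + 1) → ℝ)}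

theorem MeasureTheory.IntegrableOn.ae_integrableOn_coordLine (hs : MeasurableSet s)
    (hF : IntegrableOn F s) :
    ∀ᵐ y : Fin n → ℝ, IntegrableOn (F ∘ coordLine i y) (coordLine i y ⁻¹' s) := by
  have hmp := (volume_preserving_piFinSuccAbove (fun _ : Fin (n + 1) => ℝ) i).symm
  have hint := (hmp.integrable_comp_emb (MeasurableEquiv.measurableEmbedding _)).2
    ((integrable_indicator_iff hs).2 hF)
  filter_upwards [hint.prod_left_ae] with y hy
  exact (integrable_indicator_iff (hs.preimage (continuous_coordLine i y).measurable)).1 hy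

theorem setIntegral_eq_integral_setIntegral_coordLine [NormedSpace ℝ E] (hs : MeasurableSet s)
    (hF : IntegrableOn F s) :
    ∫ u in s, F u = ∫ y : Fin n → ℝ, ∫ t in coordLine i y ⁻¹' s, F (coordLine i y t) := by
  set e := MeasurableEquiv.piFinSuccAbove (fun _ : Fin (n + 1) => ℝ) i
  have hmp := (volume_preserving_piFinSuccAbove (fun _ : Fin (n + 1) => ℝ) i).symm
  have hint := (hmp.integrable_comp_emb (MeasurableEquiv.measurableEmbedding _)).2
    ((integrable_indicator_iff hs).2 hF)
  calc ∫ u in s, F u = ∫ z : ℝ × (Fin n → ℝ), s.indicator F (e.symm z) := by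
        rw [← integral_indicator hs, hmp.integral_comp']
    _ = ∫ y : Fin n → ℝ, ∫ t : ℝ, s.indicator F (e.symm (t, y)) := integral_prod_symm _ hint
    _ = _ := by
        congr 1 with y
        rw [← integral_indicator (hs.preimage (continuous_coordLine i y).measurable)]
        rfl

end CoordLine

theorem stmt_14_general (d : ℕ)
    (D S : Set (Fin d → ℝ)) (hD : IsOpen D) (hS : IsOpen S)
    (φ φi : (Fin d → ℝ) → ℝ) (i : Fin d)
    -- niceness along coordinate i: a.e. slices are absolutely continuous on the open
    -- slice of D, with a.e. derivative the slice of φi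
    (hslice : ∀ᵐ u ∂(volume : Measure (Fin d → ℝ)), ∀ c₁ c₂ : ℝ, c₁ ≤ c₂ →
      (∀ t ∈ Set.Icc c₁ c₂, Function.update u i t ∈ D) →
      IntervalIntegrable (fun t => φi (Function.update u i t)) volume c₁ c₂ ∧
      φ (Function.update u i c₂) - φ (Function.update u i c₁)
        = ∫ t in c₁..c₂, φi (Function.update u i t))
    -- integrability on D
    (hint1 : IntegrableOn φ D volume) (hint2 : IntegrableOn φi D volume)
    -- boundary condition on D along the i-th canonical direction
    (hbdD : ∀ u : Fin d → ℝ, ∀ t₀ : ℝ, Function.update u i t₀ ∈ frontier D →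
      Tendsto (fun t => φ (Function.update u i t))
        (𝓝[{t | Function.update u i t ∈ D}] t₀) (𝓝 0))
    -- boundary condition on S, at slice-boundary points interior to D
    (hbdS : ∀ᵐ u ∂(volume : Measure (Fin d → ℝ)), ∀ t₀ : ℝ,
      Function.update u i t₀ ∈ frontier S → Function.update u i t₀ ∈ D →
      Tendsto (fun t => φ (Function.update u i t))
        (𝓝[{t | Function.update u i t ∈ D ∩ S}] t₀) (𝓝 0)) :
    ∫ u in D ∩ S, φi u = 0 := by
  obtain ⟨n, rfl⟩ := Nat.exists_eq_add_one_of_ne_zero i.pos.ne'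
  rw [setIntegral_eq_integral_setIntegral_coordLine i (hD.inter hS).measurableSet
    (hint2.mono_set inter_subset_left)]
  refine integral_eq_zero_of_ae ?_
  filter_upwards [hint1.ae_integrableOn_coordLine i hD.measurableSet,
    hint2.ae_integrableOn_coordLine i hD.measurableSet, ae_ae_coordLine_of_ae i hslice,
    ae_ae_coordLine_of_ae i hbdS] with y hφy hφiy hslicey hbdSy
  -- the hypotheses at `coordLine i y t` only depend on the line, so a single `t` will do
  obtain ⟨t, hslicet, hbdSt⟩ := (hslicey.and hbdSy).exists
  simp only [update_coordLine] at hslicet hbdSt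
  have hγ := continuous_coordLine i y
  refine setIntegral_inter_eq_zero_of_tendsto_frontier (hD.preimage hγ) (hS.preimage hγ) hφy hφiy
    (fun a b hab hsub => (hslicet a b hab fun t ht => hsub ht).2)
    (fun t₀ ht₀ => ?_) (fun t₀ ht₀ ht₀D => hbdSt t₀ (hγ.frontier_preimage_subset S ht₀) ht₀D)
  have hbdy := hbdD (coordLine i y 0) t₀
    (by rw [update_coordLine]; exact hγ.frontier_preimage_subset D ht₀)
  simp only [update_coordLine] at hbdy
  exact hbdy

/-- multivariate Stokes-type lemma: let `D ⊆ ℝ^d` be open,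
`φ : D → ℝ` nice along the `i`-th coordinate (a.e. slices absolutely continuous with
partial derivative `∂ᵢφ = φi`), with `φ` and `∂ᵢφ` integrable on `D`, `φ(u) → 0` as `u`
approaches any boundary point of `D` along the `i`-th canonical direction, and `S` open
such that for a.e. slices `φ` tends to `0` at boundary points of `S` interior to the
slice of `D`. Then `∫_{D ∩ S} ∂ᵢφ dm = 0`. -/
theorem stmt_14 (d : ℕ) (hd : 2 ≤ d)
    (D S : Set (Fin d → ℝ)) (hD : IsOpen D) (hS : IsOpen S)
    (φ φi : (Fin d → ℝ) → ℝ) (i : Fin d)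
    (hφ_meas : Measurable φ) (hφi_meas : Measurable φi)
    -- niceness along coordinate i: a.e. slices are absolutely continuous on the open
    -- slice of D, with a.e. derivative the slice of φi
    (hslice : ∀ᵐ u ∂(volume : Measure (Fin d → ℝ)), ∀ c₁ c₂ : ℝ, c₁ ≤ c₂ →
      (∀ t ∈ Set.Icc c₁ c₂, Function.update u i t ∈ D) →
      IntervalIntegrable (fun t => φi (Function.update u i t)) volume c₁ c₂ ∧
      φ (Function.update u i c₂) - φ (Function.update u i c₁)
        = ∫ t in c₁..c₂, φi (Function.update u i t))
    -- integrability on D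
    (hint1 : IntegrableOn φ D volume) (hint2 : IntegrableOn φi D volume)
    -- boundary condition on D along the i-th canonical direction
    (hbdD : ∀ u : Fin d → ℝ, ∀ t₀ : ℝ, Function.update u i t₀ ∈ frontier D →
      Tendsto (fun t => φ (Function.update u i t))
        (𝓝[{t | Function.update u i t ∈ D}] t₀) (𝓝 0))
    -- boundary condition on S, at slice-boundary points interior to D
    (hbdS : ∀ᵐ u ∂(volume : Measure (Fin d → ℝ)), ∀ t₀ : ℝ,
      Function.update u i t₀ ∈ frontier S → Function.update u i t₀ ∈ D →
      Tendsto (fun t => φ (Function.update u i t))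
        (𝓝[{t | Function.update u i t ∈ D ∩ S}] t₀) (𝓝 0)) :
    ∫ u in D ∩ S, φi u = 0 :=
  stmt_14_general d D S hD hS φ φi i hslice hint1 hint2 hbdD hbdS
end

section
/- Integration by parts for nice functions on an open domain: let D ⊆ ℝ^d be open, f, g : D → ℝ nice on D with g continuous, ∫_D |fg| dm < ∞, ∫_D |∂_i f · g + f · ∂_i g| dm < ∞ for some coordinate i, and f(u)g(u) → 0 as u approaches any finite-norm boundary point of D along direction i. Then ∫_{D ∩ {g ≠ 0}} (∂_i f · g + f · ∂_i g) dm = 0. -/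
/-!
By Fubini along the `i`-th coordinate it suffices that almost every line parallel to the `i`-th
axis contributes zero. On such a line `f` and `g` are locally absolutely continuous on the open
slice `V` of `D`, hence so is `fg`, with derivative `f'g + fg'`. The slice of `D ∩ {g ≠ 0}` is
open, a countable disjoint union of open intervals, and on each of them the integral of the
derivative is the difference of the limits of `fg` at the two ends. Both limits vanish: at an
end inside `V` because `g = 0` there and `fg` is continuous, at an end on the frontier of `V` by
hypothesis, and at `±∞` because `fg` is integrable.
-/

open MeasureTheory Filter Topology Set

section Order

variable {α : Type*} [ConditionallyCompleteLinearOrder α] {J : Set α} {c : α}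

lemma IsOpen.csSup_notMem [TopologicalSpace α] [OrderTopology α] [DenselyOrdered α]
    [NoMaxOrder α] (hJ : IsOpen J) (hbdd : BddAbove J) : sSup J ∉ J := fun hJ' => by
  obtain ⟨x, hx, hxJ⟩ := (hJ.eventually_mem hJ').exists_gt
  exact (le_csSup hbdd hxJ).not_gt hx

lemma IsOpen.csInf_notMem [TopologicalSpace α] [OrderTopology α] [DenselyOrdered α]
    [NoMinOrder α] (hJ : IsOpen J) (hbdd : BddBelow J) : sInf J ∉ J :=
  IsOpen.csSup_notMem (α := αᵒᵈ) hJ hbdd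

lemma Set.OrdConnected.inter_Ioi_eq_Ioo_csSup (hJc : J.OrdConnected) (hc : c ∈ J)
    (hbdd : BddAbove J) (hJ : sSup J ∉ J) : J ∩ Ioi c = Ioo c (sSup J) := by
  ext x
  constructor
  · rintro ⟨hxJ, hcx⟩
    exact ⟨hcx, (le_csSup hbdd hxJ).lt_of_ne (ne_of_mem_of_not_mem hxJ hJ)⟩
  · rintro ⟨hcx, hxb⟩
    obtain ⟨y, hyJ, hxy⟩ := exists_lt_of_lt_csSup ⟨c, hc⟩ hxb
    exact ⟨hJc.out hc hyJ ⟨hcx.le, hxy.le⟩, hcx⟩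

lemma Set.OrdConnected.inter_Iio_eq_Ioo_csInf (hJc : J.OrdConnected) (hc : c ∈ J)
    (hbdd : BddBelow J) (hJ : sInf J ∉ J) : J ∩ Iio c = Ioo (sInf J) c := by
  have := Set.OrdConnected.inter_Ioi_eq_Ioo_csSup (α := αᵒᵈ) hJc.dual hc hbdd hJ
  exact Set.ext fun x => (Set.ext_iff.1 this x).trans and_comm

lemma Set.OrdConnected.Ioi_subset_of_not_bddAbove (hJc : J.OrdConnected) (hc : c ∈ J)
    (hbdd : ¬BddAbove J) : Ioi c ⊆ J := fun x hcx => by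
  obtain ⟨y, hyJ, hxy⟩ := not_bddAbove_iff.1 hbdd x
  exact hJc.out hc hyJ ⟨hcx.le, hxy.le⟩

lemma Set.OrdConnected.Iio_subset_of_not_bddBelow (hJc : J.OrdConnected) (hc : c ∈ J)
    (hbdd : ¬BddBelow J) : Iio c ⊆ J :=
  Set.OrdConnected.Ioi_subset_of_not_bddAbove (α := αᵒᵈ) hJc.dual hc hbdd

end Order

section IntegrableLimits

variable {E : Type*} [NormedAddCommGroup E] {φ : ℝ → E} {a : ℝ} {L : E}

lemma MeasureTheory.IntegrableOn.eq_zero_of_tendsto_atTop (hφ : IntegrableOn φ (Ioi a))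
    (h : Tendsto φ atTop (𝓝 L)) : L = 0 := by
  refine IntegrableAtFilter.eq_zero_of_tendsto ⟨Ioi a, Ioi_mem_atTop a, hφ⟩ (fun s hs => ?_) h
  obtain ⟨b, hb⟩ := mem_atTop_sets.1 hs
  exact top_le_iff.1 (Real.volume_Ici (a := b) ▸ measure_mono fun x hx => hb x hx)

lemma MeasureTheory.IntegrableOn.eq_zero_of_tendsto_atBot (hφ : IntegrableOn φ (Iio a))
    (h : Tendsto φ atBot (𝓝 L)) : L = 0 := by
  refine IntegrableAtFilter.eq_zero_of_tendsto ⟨Iio a, Iio_mem_atBot a, hφ⟩ (fun s hs => ?_) h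
  obtain ⟨b, hb⟩ := mem_atBot_sets.1 hs
  exact top_le_iff.1 (Real.volume_Iic (a := b) ▸ measure_mono fun x hx => hb x hx)

end IntegrableLimits

section Components

variable {X E : Type*} [TopologicalSpace X] [LocallyConnectedSpace X] {U : Set X}

lemma IsOpen.frontier_connectedComponentIn_subset (hU : IsOpen U) (x : X) :
    frontier (connectedComponentIn U x) ⊆ frontier U := by
  intro y hy
  rw [hU.connectedComponentIn.frontier_eq] at hy
  rw [hU.frontier_eq]
  refine ⟨closure_mono (connectedComponentIn_subset U x) hy.1, fun hyU => hy.2 ?_⟩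
  obtain ⟨z, hzy, hzx⟩ := mem_closure_iff.1 hy.1 _ hU.connectedComponentIn
    (mem_connectedComponentIn hyU)
  rw [connectedComponentIn_eq hzx, ← connectedComponentIn_eq hzy]
  exact mem_connectedComponentIn hyU

variable [TopologicalSpace.SeparableSpace X] [MeasurableSpace X] [OpensMeasurableSpace X]
  [NormedAddCommGroup E] [NormedSpace ℝ E] {μ : Measure X} {f : X → E}

theorem setIntegral_eq_zero_of_forall_connectedComponentIn_s15 (hU : IsOpen U)
    (hf : IntegrableOn f U μ) (h : ∀ x ∈ U, ∫ y in connectedComponentIn U x, f y ∂μ = 0) :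
    ∫ x in U, f x ∂μ = 0 := by
  set C := connectedComponentIn U '' U
  have hdisj : C.PairwiseDisjoint id := by
    rintro _ ⟨x, -, rfl⟩ _ ⟨y, -, rfl⟩ hne
    refine disjoint_left.2 fun z hzx hzy => hne ?_
    rw [connectedComponentIn_eq hzx, connectedComponentIn_eq hzy]
  have hC : C.Countable := hdisj.countable_of_isOpen
    (by rintro _ ⟨x, -, rfl⟩; exact hU.connectedComponentIn)
    (by rintro _ ⟨x, hx, rfl⟩; exact ⟨x, mem_connectedComponentIn hx⟩)
  have hUC : U = ⋃ J : C, (J : Set X) := by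
    refine Subset.antisymm
      (fun x hx => mem_iUnion.2 ⟨⟨_, x, hx, rfl⟩, mem_connectedComponentIn hx⟩) fun y hy => ?_
    obtain ⟨⟨J, hJ⟩, hyJ : y ∈ J⟩ := mem_iUnion.1 hy
    obtain ⟨x, -, rfl⟩ := hJ
    exact connectedComponentIn_subset U x hyJ
  have := hC.to_subtype
  rw [hUC, integral_iUnion (s := fun J : C => (J : Set X)) (fun J => ?_)
    (fun J K hJK => hdisj J.2 K.2 (Subtype.coe_ne_coe.2 hJK)) (hUC ▸ hf)]
  · refine (tsum_congr fun J => ?_).trans tsum_zero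
    obtain ⟨_, x, hx, rfl⟩ := J
    exact h x hx
  · obtain ⟨_, x, -, rfl⟩ := J
    exact hU.connectedComponentIn.measurableSet

end Components

lemma absolutelyContinuousOnInterval_const_add_primitive {f : ℝ → ℝ} {a b : ℝ}
    (hf : IntervalIntegrable f volume a b) (C : ℝ) :
    AbsolutelyContinuousOnInterval (fun t => C + ∫ s in a..t, f s) a b :=
  ((LipschitzWith.const C).lipschitzOnWith.absolutelyContinuousOnInterval).add
    (hf.absolutelyContinuousOnInterval_intervalIntegral left_mem_uIcc)

theorem intervalIntegrable_and_integral_mul_add_mul {F G f g : ℝ → ℝ} {a b : ℝ}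
    (hf : IntervalIntegrable f volume a b) (hg : IntervalIntegrable g volume a b)
    (hF : EqOn F (fun t => F a + ∫ s in a..t, f s) (uIcc a b))
    (hG : EqOn G (fun t => G a + ∫ s in a..t, g s) (uIcc a b)) :
    IntervalIntegrable (fun t => f t * G t + F t * g t) volume a b ∧
      ∫ t in a..b, (f t * G t + F t * g t) = F b * G b - F a * G a := by
  set F₀ := fun t => F a + ∫ s in a..t, f s
  set G₀ := fun t => G a + ∫ s in a..t, g s
  have hF₀ := absolutelyContinuousOnInterval_const_add_primitive hf (F a)
  have hG₀ := absolutelyContinuousOnInterval_const_add_primitive hg (G a)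
  have hcongr : ∀ x ∈ uIoc a b, f x * G₀ x + F₀ x * g x = f x * G x + F x * g x := by
    intro x hx
    rw [hF (uIoc_subset_uIcc hx), hG (uIoc_subset_uIcc hx)]
  refine ⟨((hf.mul_continuousOn hG₀.continuousOn).add
    (hg.continuousOn_mul hF₀.continuousOn)).congr_ae
    ((ae_restrict_mem measurableSet_uIoc).mono hcongr), ?_⟩
  have hderiv : ∀ᵐ x, x ∈ uIoc a b →
      f x * G x + F x * g x = deriv F₀ x * G₀ x + F₀ x * deriv G₀ x := by
    filter_upwards [hf.ae_hasDerivAt_integral, hg.ae_hasDerivAt_integral] with x hfx hgx hx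
    have hx' := uIoc_subset_uIcc hx
    rw [← hcongr x hx, ((hfx hx' a left_mem_uIcc).const_add (F a)).deriv,
      ((hgx hx' a left_mem_uIcc).const_add (G a)).deriv]
  rw [intervalIntegral.integral_congr_ae hderiv, hF₀.integral_deriv_mul_eq_sub hG₀,
    hF right_mem_uIcc, hG right_mem_uIcc]
  simp [F₀, G₀]

/-- `φ` is a primitive of `ψ` on every compact interval inside `U`; for open `U` this says that
`φ` is locally absolutely continuous on `U` with derivative `ψ` a.e. -/
def IsPrimitiveOn (φ ψ : ℝ → ℝ) (U : Set ℝ) : Prop :=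
  ∀ a b, a ≤ b → Icc a b ⊆ U → IntervalIntegrable ψ volume a b ∧ φ b - φ a = ∫ t in a..b, ψ t

namespace IsPrimitiveOn

variable {φ ψ φ₁ ψ₁ φ₂ ψ₂ : ℝ → ℝ} {U V J : Set ℝ} {c : ℝ}

lemma mono (h : IsPrimitiveOn φ ψ U) (hVU : V ⊆ U) : IsPrimitiveOn φ ψ V :=
  fun a b hab hsub => h a b hab (hsub.trans hVU)

lemma eqOn_add_integral (h : IsPrimitiveOn φ ψ U) {a b : ℝ} (hab : a ≤ b) (hsub : Icc a b ⊆ U) :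
    EqOn φ (fun t => φ a + ∫ s in a..t, ψ s) (uIcc a b) := by
  intro t ht
  rw [uIcc_of_le hab] at ht
  linarith [(h a t ht.1 ((Icc_subset_Icc_right ht.2).trans hsub)).2]

lemma continuousOn (h : IsPrimitiveOn φ ψ U) (hU : IsOpen U) : ContinuousOn φ U := by
  intro x hx
  obtain ⟨a, b, hxab, hnhds, hsub⟩ := exists_Icc_mem_subset_of_mem_nhds (hU.mem_nhds hx)
  have hab : a ≤ b := hxab.1.trans hxab.2
  have hcont := (absolutelyContinuousOnInterval_const_add_primitive (h a b hab hsub).1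
    (φ a)).continuousOn.congr (h.eqOn_add_integral hab hsub)
  rw [uIcc_of_le hab] at hcont
  exact (hcont.continuousAt hnhds).continuousWithinAt

lemma mul (h₁ : IsPrimitiveOn φ₁ ψ₁ U) (h₂ : IsPrimitiveOn φ₂ ψ₂ U) :
    IsPrimitiveOn (fun t => φ₁ t * φ₂ t) (fun t => ψ₁ t * φ₂ t + φ₁ t * ψ₂ t) U := by
  intro a b hab hsub
  obtain ⟨hint, heq⟩ := intervalIntegrable_and_integral_mul_add_mul (h₁ a b hab hsub).1
    (h₂ a b hab hsub).1 (h₁.eqOn_add_integral hab hsub) (h₂.eqOn_add_integral hab hsub)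
  exact ⟨hint, heq.symm⟩

lemma setIntegral_inter_Ioi (h : IsPrimitiveOn φ ψ J) (hJ : IsOpen J) (hJc : J.OrdConnected)
    (hc : c ∈ J) (hψ : IntegrableOn ψ J) (hφ : IntegrableOn φ J)
    (hbd : ∀ t ∈ frontier J, Tendsto φ (𝓝[J] t) (𝓝 0)) :
    ∫ t in J ∩ Ioi c, ψ t = -φ c := by
  have hrep : ∀ t ∈ J, c ≤ t → φ t = φ c + ∫ s in c..t, ψ s :=
    fun t ht hct => h.eqOn_add_integral hct (hJc.out hc ht) right_mem_uIcc
  by_cases hbdd : BddAbove J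
  · set b := sSup J
    have hbJ : b ∉ J := hJ.csSup_notMem hbdd
    have hcb : c < b := (le_csSup hbdd hc).lt_of_ne (ne_of_mem_of_not_mem hc hbJ)
    have hJ_Ioi := hJc.inter_Ioi_eq_Ioo_csSup hc hbdd hbJ
    have hIoo : Ioo c b ⊆ J := hJ_Ioi ▸ inter_subset_left
    have hψ' : IntegrableOn ψ (uIcc c b) := by
      rw [uIcc_of_le hcb.le, integrableOn_Icc_iff_integrableOn_Ioo]
      exact hψ.mono_set hIoo
    have hlim : Tendsto φ (𝓝[Ioo c b] b) (𝓝 (φ c + ∫ s in c..b, ψ s)) := by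
      refine Tendsto.congr' (eventually_nhdsWithin_of_forall fun t ht =>
        (hrep t (hIoo ht) ht.1.le).symm) ?_
      refine ((continuousOn_const.add (intervalIntegral.continuousOn_primitive_interval hψ'))
        b right_mem_uIcc).mono ?_ |>.tendsto
      exact uIcc_of_le hcb.le ▸ Ioo_subset_Icc_self
    have hb : b ∈ frontier J := hJ.frontier_eq ▸ ⟨csSup_mem_closure ⟨c, hc⟩ hbdd, hbJ⟩
    have : φ c + ∫ s in c..b, ψ s = 0 := by
      have := right_nhdsWithin_Ioo_neBot hcb
      exact tendsto_nhds_unique hlim ((hbd b hb).mono_left (nhdsWithin_mono _ hIoo))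
    rw [hJ_Ioi, ← integral_Ioc_eq_integral_Ioo, ← intervalIntegral.integral_of_le hcb.le]
    linarith
  · have hIoi := hJc.Ioi_subset_of_not_bddAbove hc hbdd
    have hlim : Tendsto φ atTop (𝓝 (φ c + ∫ t in Ioi c, ψ t)) :=
      (tendsto_const_nhds.add (intervalIntegral_tendsto_integral_Ioi c (hψ.mono_set hIoi)
        tendsto_id)).congr' ((eventually_gt_atTop c).mono fun t ht => (hrep t (hIoi ht) ht.le).symm)
    rw [inter_eq_right.2 hIoi]
    linarith [(hφ.mono_set hIoi).eq_zero_of_tendsto_atTop hlim]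

lemma setIntegral_inter_Iio (h : IsPrimitiveOn φ ψ J) (hJ : IsOpen J) (hJc : J.OrdConnected)
    (hc : c ∈ J) (hψ : IntegrableOn ψ J) (hφ : IntegrableOn φ J)
    (hbd : ∀ t ∈ frontier J, Tendsto φ (𝓝[J] t) (𝓝 0)) :
    ∫ t in J ∩ Iio c, ψ t = φ c := by
  have hrep : ∀ t ∈ J, t ≤ c → φ t = φ c - ∫ s in t..c, ψ s := fun t ht htc => by
    linarith [h.eqOn_add_integral htc (hJc.out ht hc) right_mem_uIcc]
  by_cases hbdd : BddBelow J
  · set a := sInf J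
    have haJ : a ∉ J := hJ.csInf_notMem hbdd
    have hac : a < c := (csInf_le hbdd hc).lt_of_ne (ne_of_mem_of_not_mem hc haJ).symm
    have hJ_Iio := hJc.inter_Iio_eq_Ioo_csInf hc hbdd haJ
    have hIoo : Ioo a c ⊆ J := hJ_Iio ▸ inter_subset_left
    have hψ' : IntegrableOn ψ (uIcc a c) := by
      rw [uIcc_of_le hac.le, integrableOn_Icc_iff_integrableOn_Ioo]
      exact hψ.mono_set hIoo
    have hlim : Tendsto φ (𝓝[Ioo a c] a) (𝓝 (φ c - ∫ s in a..c, ψ s)) := by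
      refine Tendsto.congr' (eventually_nhdsWithin_of_forall fun t ht =>
        (hrep t (hIoo ht) ht.2.le).symm) ?_
      refine ((continuousOn_const.sub
        (intervalIntegral.continuousOn_primitive_interval_left hψ'))
        a left_mem_uIcc).mono ?_ |>.tendsto
      exact uIcc_of_le hac.le ▸ Ioo_subset_Icc_self
    have ha : a ∈ frontier J := hJ.frontier_eq ▸ ⟨csInf_mem_closure ⟨c, hc⟩ hbdd, haJ⟩
    have : φ c - ∫ s in a..c, ψ s = 0 := by
      have := left_nhdsWithin_Ioo_neBot hac
      exact tendsto_nhds_unique hlim ((hbd a ha).mono_left (nhdsWithin_mono _ hIoo))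
    rw [hJ_Iio, ← integral_Ioc_eq_integral_Ioo, ← intervalIntegral.integral_of_le hac.le]
    linarith
  · have hIio := hJc.Iio_subset_of_not_bddBelow hc hbdd
    have hIic : Iic c ⊆ J := Iio_insert (a := c) ▸ insert_subset hc hIio
    have hlim : Tendsto φ atBot (𝓝 (φ c - ∫ t in Iic c, ψ t)) :=
      (tendsto_const_nhds.sub (intervalIntegral_tendsto_integral_Iic c (hψ.mono_set hIic)
        tendsto_id)).congr' ((eventually_le_atBot c).mono fun t ht => (hrep t (hIic ht) ht).symm)
    rw [inter_eq_right.2 hIio, ← integral_Iic_eq_integral_Iio]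
    linarith [(hφ.mono_set hIio).eq_zero_of_tendsto_atBot hlim]

lemma setIntegral_eq_zero_of_ordConnected (h : IsPrimitiveOn φ ψ J) (hJ : IsOpen J)
    (hJc : J.OrdConnected) (hψ : IntegrableOn ψ J) (hφ : IntegrableOn φ J)
    (hbd : ∀ t ∈ frontier J, Tendsto φ (𝓝[J] t) (𝓝 0)) :
    ∫ t in J, ψ t = 0 := by
  obtain rfl | ⟨c, hc⟩ := J.eq_empty_or_nonempty
  · simp
  have hIci : ∫ t in J \ Iio c, ψ t = ∫ t in J ∩ Ioi c, ψ t := by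
    rw [sdiff_eq, compl_Iio]
    exact setIntegral_congr_set (ae_eq_refl J |>.inter Ioi_ae_eq_Ici.symm)
  rw [← integral_inter_add_sdiff measurableSet_Iio hψ, hIci,
    h.setIntegral_inter_Iio hJ hJc hc hψ hφ hbd, h.setIntegral_inter_Ioi hJ hJc hc hψ hφ hbd]
  ring

theorem setIntegral_eq_zero (h : IsPrimitiveOn φ ψ U) (hU : IsOpen U) (hψ : IntegrableOn ψ U)
    (hφ : IntegrableOn φ U) (hbd : ∀ t ∈ frontier U, Tendsto φ (𝓝[U] t) (𝓝 0)) :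
    ∫ t in U, ψ t = 0 := by
  refine setIntegral_eq_zero_of_forall_connectedComponentIn_s15 hU hψ fun x _ => ?_
  have hsub := connectedComponentIn_subset U x
  exact (h.mono hsub).setIntegral_eq_zero_of_ordConnected hU.connectedComponentIn
    isPreconnected_connectedComponentIn.ordConnected (hψ.mono_set hsub) (hφ.mono_set hsub)
    fun t ht => (hbd t (hU.frontier_connectedComponentIn_subset x ht)).mono_left
      (nhdsWithin_mono _ hsub)

end IsPrimitiveOn

theorem setIntegral_inter_ne_zero_mul_add_mul_eq_zero {V : Set ℝ} (hV : IsOpen V)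
    {F F' G G' : ℝ → ℝ} (hF : IsPrimitiveOn F F' V) (hG : IsPrimitiveOn G G' V)
    (hFG : IntegrableOn (fun t => F t * G t) (V ∩ {t | G t ≠ 0}))
    (hFG' : IntegrableOn (fun t => F' t * G t + F t * G' t) (V ∩ {t | G t ≠ 0}))
    (hbd : ∀ t ∈ frontier V, Tendsto (fun t => F t * G t) (𝓝[V] t) (𝓝 0)) :
    ∫ t in V ∩ {t | G t ≠ 0}, (F' t * G t + F t * G' t) = 0 := by
  have hU : IsOpen (V ∩ {t | G t ≠ 0}) :=
    (hG.continuousOn hV).isOpen_inter_preimage hV isOpen_compl_singleton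
  refine ((hF.mul hG).mono inter_subset_left).setIntegral_eq_zero hU hFG' hFG fun t ht => ?_
  by_cases htV : t ∈ V
  · -- inside `V`, the frontier of `V ∩ {G ≠ 0}` lies in `{G = 0}`, where `F * G` is continuous
    have hGt : G t = 0 := by
      by_contra hGt
      exact (hU.frontier_eq ▸ ht).2 ⟨htV, hGt⟩
    have hcont := ((hF.mul hG).continuousOn hV).continuousAt (hV.mem_nhds htV)
    simpa [hGt] using hcont.tendsto.mono_left nhdsWithin_le_nhds
  · have ht' : t ∈ frontier V := hV.frontier_eq ▸
      ⟨closure_mono inter_subset_left (frontier_subset_closure ht), htV⟩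
    exact (hbd t ht').mono_left (nhdsWithin_mono _ inter_subset_left)

section Slicing

variable {n : ℕ} (i : Fin (n + 1))

def insertNthEquiv : (Fin n → ℝ) × ℝ ≃ᵐ (Fin (n + 1) → ℝ) :=
  MeasurableEquiv.prodComm.trans (MeasurableEquiv.piFinSuccAbove (fun _ => ℝ) i).symm

lemma measurePreserving_insertNthEquiv :
    MeasurePreserving (insertNthEquiv i) (volume.prod volume) volume :=
  ((volume_preserving_piFinSuccAbove (fun _ => ℝ) i).symm _).comp Measure.measurePreserving_swap

lemma ae_ae_insertNth {P : (Fin (n + 1) → ℝ) → Prop} (h : ∀ᵐ u, P u) :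
    ∀ᵐ w : Fin n → ℝ, ∀ᵐ t : ℝ, P (i.insertNth t w) :=
  Measure.ae_ae_of_ae_prod ((measurePreserving_insertNthEquiv i).quasiMeasurePreserving.ae h)

variable {E : Type*} [NormedAddCommGroup E] {F : (Fin (n + 1) → ℝ) → E}

lemma MeasureTheory.Integrable.comp_insertNthEquiv (hF : Integrable F) :
    Integrable (F ∘ insertNthEquiv i) (volume.prod volume) :=
  ((measurePreserving_insertNthEquiv i).integrable_comp_emb
    (insertNthEquiv i).measurableEmbedding).2 hF

lemma MeasureTheory.Integrable.ae_integrable_insertNth (hF : Integrable F) :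
    ∀ᵐ w : Fin n → ℝ, Integrable (fun t => F (i.insertNth t w)) :=
  (hF.comp_insertNthEquiv i).prod_right_ae

lemma integral_eq_integral_integral_insertNth [NormedSpace ℝ E] (hF : Integrable F) :
    ∫ u, F u = ∫ w, ∫ t, F (i.insertNth t w) := by
  rw [← (measurePreserving_insertNthEquiv i).integral_comp' F]
  exact integral_prod _ (hF.comp_insertNthEquiv i)

lemma measurable_insertNth_left (w : Fin n → ℝ) :
    Measurable fun t : ℝ => i.insertNth (α := fun _ => ℝ) t w := by
  fun_prop

variable {S : Set (Fin (n + 1) → ℝ)}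

lemma MeasureTheory.IntegrableOn.ae_integrableOn_insertNth (hS : MeasurableSet S)
    (hF : IntegrableOn F S) :
    ∀ᵐ w : Fin n → ℝ, IntegrableOn (fun t => F (i.insertNth t w)) {t | i.insertNth t w ∈ S} := by
  filter_upwards [((integrable_indicator_iff hS).2 hF).ae_integrable_insertNth i] with w hw
  exact (integrable_indicator_iff (hS.preimage (measurable_insertNth_left i w))).1 hw

lemma setIntegral_eq_integral_setIntegral_insertNth [NormedSpace ℝ E] (hS : MeasurableSet S)
    (hF : IntegrableOn F S) :
    ∫ u in S, F u = ∫ w, ∫ t in {t | i.insertNth t w ∈ S}, F (i.insertNth t w) := by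
  rw [← integral_indicator (f := F) hS,
    integral_eq_integral_integral_insertNth i ((integrable_indicator_iff hS).2 hF)]
  congr 1 with w
  have hSw : MeasurableSet {t | i.insertNth (α := fun _ => ℝ) t w ∈ S} :=
    hS.preimage (measurable_insertNth_left i w)
  rw [← integral_indicator hSw]
  rfl

end Slicing

theorem stmt_15_general (d : ℕ)
    (D : Set (Fin d → ℝ)) (hD : IsOpen D)
    (f f' g g' : (Fin d → ℝ) → ℝ) (i : Fin d)
    (hg_cont : ContinuousOn g D)
    -- niceness of f along coordinate i: a.e. slices absolutely continuous on the slice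
    -- of D, with a.e. derivative the slice of f'
    (hf_slice : ∀ᵐ u ∂(volume : Measure (Fin d → ℝ)), ∀ c₁ c₂ : ℝ, c₁ ≤ c₂ →
      (∀ t ∈ Set.Icc c₁ c₂, Function.update u i t ∈ D) →
      IntervalIntegrable (fun t => f' (Function.update u i t)) volume c₁ c₂ ∧
      f (Function.update u i c₂) - f (Function.update u i c₁)
        = ∫ t in c₁..c₂, f' (Function.update u i t))
    -- niceness of g along coordinate i
    (hg_slice : ∀ᵐ u ∂(volume : Measure (Fin d → ℝ)), ∀ c₁ c₂ : ℝ, c₁ ≤ c₂ →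
      (∀ t ∈ Set.Icc c₁ c₂, Function.update u i t ∈ D) →
      IntervalIntegrable (fun t => g' (Function.update u i t)) volume c₁ c₂ ∧
      g (Function.update u i c₂) - g (Function.update u i c₁)
        = ∫ t in c₁..c₂, g' (Function.update u i t))
    -- integrability assumptions
    (hint1 : IntegrableOn (fun u => f u * g u) D volume)
    (hint2 : IntegrableOn (fun u => f' u * g u + f u * g' u) D volume)
    -- boundary condition: f·g tends to 0 at the boundary of D along direction i
    (hbdD : ∀ u : Fin d → ℝ, ∀ t₀ : ℝ, Function.update u i t₀ ∈ frontier D →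
      Tendsto (fun t => f (Function.update u i t) * g (Function.update u i t))
        (𝓝[{t | Function.update u i t ∈ D}] t₀) (𝓝 0)) :
    ∫ u in D ∩ {u | g u ≠ 0}, (f' u * g u + f u * g' u) = 0 := by
  obtain ⟨n, rfl⟩ : ∃ n, d = n + 1 := Nat.exists_eq_add_one.2 i.pos
  set S := D ∩ {u | g u ≠ 0}
  have hS : MeasurableSet S :=
    (hg_cont.isOpen_inter_preimage hD isOpen_compl_singleton).measurableSet
  rw [setIntegral_eq_integral_setIntegral_insertNth i hS (hint2.mono_set inter_subset_left)]
  refine integral_eq_zero_of_ae ?_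
  filter_upwards [ae_ae_insertNth i hf_slice, ae_ae_insertNth i hg_slice,
    (hint1.mono_set inter_subset_left).ae_integrableOn_insertNth i hS,
    (hint2.mono_set inter_subset_left).ae_integrableOn_insertNth i hS] with w hfw hgw hfg hfg'
  -- the slice hypotheses at `i.insertNth t₀ w` only depend on `w`
  obtain ⟨t₀, hft₀, hgt₀⟩ := (hfw.and hgw).exists
  simp only [Fin.update_insertNth] at hft₀ hgt₀
  have hcont : Continuous fun t : ℝ => i.insertNth (α := fun _ => ℝ) t w := by fun_prop
  refine setIntegral_inter_ne_zero_mul_add_mul_eq_zero (hD.preimage hcont)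
    (fun a b hab hsub => hft₀ a b hab hsub) (fun a b hab hsub => hgt₀ a b hab hsub) hfg hfg'
    fun t ht => ?_
  have hbd := hbdD (i.insertNth t₀ w) t
    (by rw [Fin.update_insertNth]; exact hcont.frontier_preimage_subset D ht)
  simp only [Fin.update_insertNth] at hbd
  exact hbd

/-- integration by parts for nice functions on an open domain:
let `D ⊆ ℝ^d` be open, `f, g : D → ℝ` nice along the `i`-th coordinate (a.e. slices
absolutely continuous with partial derivatives `f'`, `g'`), with `g` continuous,
`∫_D |fg| dm < ∞`, `∫_D |∂ᵢf·g + f·∂ᵢg| dm < ∞`, and `f(u)g(u) → 0` as `u` approaches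
any boundary point of `D` along the `i`-th canonical direction. Then
`∫_{D ∩ {g ≠ 0}} (∂ᵢf·g + f·∂ᵢg) dm = 0`. -/
theorem stmt_15 (d : ℕ) (hd : 2 ≤ d)
    (D : Set (Fin d → ℝ)) (hD : IsOpen D)
    (f f' g g' : (Fin d → ℝ) → ℝ) (i : Fin d)
    (hf_meas : Measurable f) (hf'_meas : Measurable f')
    (hg'_meas : Measurable g')
    (hg_cont : ContinuousOn g D)
    -- niceness of f along coordinate i: a.e. slices absolutely continuous on the slice
    -- of D, with a.e. derivative the slice of f'
    (hf_slice : ∀ᵐ u ∂(volume : Measure (Fin d → ℝ)), ∀ c₁ c₂ : ℝ, c₁ ≤ c₂ →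
      (∀ t ∈ Set.Icc c₁ c₂, Function.update u i t ∈ D) →
      IntervalIntegrable (fun t => f' (Function.update u i t)) volume c₁ c₂ ∧
      f (Function.update u i c₂) - f (Function.update u i c₁)
        = ∫ t in c₁..c₂, f' (Function.update u i t))
    -- niceness of g along coordinate i
    (hg_slice : ∀ᵐ u ∂(volume : Measure (Fin d → ℝ)), ∀ c₁ c₂ : ℝ, c₁ ≤ c₂ →
      (∀ t ∈ Set.Icc c₁ c₂, Function.update u i t ∈ D) →
      IntervalIntegrable (fun t => g' (Function.update u i t)) volume c₁ c₂ ∧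
      g (Function.update u i c₂) - g (Function.update u i c₁)
        = ∫ t in c₁..c₂, g' (Function.update u i t))
    -- integrability assumptions
    (hint1 : IntegrableOn (fun u => f u * g u) D volume)
    (hint2 : IntegrableOn (fun u => f' u * g u + f u * g' u) D volume)
    -- boundary condition: f·g tends to 0 at the boundary of D along direction i
    (hbdD : ∀ u : Fin d → ℝ, ∀ t₀ : ℝ, Function.update u i t₀ ∈ frontier D →
      Tendsto (fun t => f (Function.update u i t) * g (Function.update u i t))
        (𝓝[{t | Function.update u i t ∈ D}] t₀) (𝓝 0)) :
    ∫ u in D ∩ {u | g u ≠ 0}, (f' u * g u + f u * g' u) = 0 :=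
  stmt_15_general d D hD f f' g g' i hg_cont hf_slice hg_slice hint1 hint2 hbdD
end

section
/- Fisher information of product models along canonical directions: if the μ-dominated model (P_θ), θ ∈ Θ ⊆ ℝ^p open, is differentiable in L²(μ) at θ₀ along canonical directions with partial derivatives ξ̇_{θ₀,1}, …, ξ̇_{θ₀,p}, then the n-fold product model (P_θ^{⊗n}) is differentiable in L²(μ^{⊗n}) at θ₀ along canonical directions, with i-th partial derivative (x₁,…,x_n) ↦ Σ_{k=1}^n ξ̇_{θ₀,i}(x_k) Π_{k'≠k} ξ_{θ₀}(x_{k'}), and Fisher information matrix I_{P^{⊗n}}(θ₀) = n · I_P(θ₀). -/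
/-!
Write `ξ_θ = √f_θ`, a unit vector of `L²(μ)`, and let `a(t)` be its class along the `i`-th
coordinate line through `θ₀`. Differentiability in `L²(μ)` is `HasDerivAt a ξ̇ᵢ`, and since
`‖a(t)‖ = 1` the derivative is orthogonal to `ξ_{θ₀}`. Inner products of elementary tensors in
`L²(μ^⊗n)` factor into products of inner products in `L²(μ)`, so the Gram matrix of `A(t) = a(t)^⊗n`
and of the candidate derivative `W = ∑ₖ ξ_{θ₀} ⊗ ⋯ ⊗ ξ̇ᵢ ⊗ ⋯ ⊗ ξ_{θ₀}` is explicit in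
`⟪a(t), ξ_{θ₀}⟫` and `⟪a(t), ξ̇ᵢ⟫`; this data alone forces `‖(A(t) - A(θ₀ᵢ)) / (t - θ₀ᵢ) - W‖ → 0`.
The same factorisation, with `ξ̇ⱼ ⟂ ξ_{θ₀}`, gives `⟪Wᵢ, Wⱼ⟫ = n ⟪ξ̇ᵢ, ξ̇ⱼ⟫`.
-/

open MeasureTheory Filter Topology
open scoped InnerProductSpace

section InnerProductSpace

theorem hasDerivAt_iff_tendsto_norm_sq_div {G : Type*} [NormedAddCommGroup G] [NormedSpace ℝ G]
    {a : ℝ → G} {D : G} {t₀ : ℝ} :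
    HasDerivAt a D t₀ ↔
      Tendsto (fun t => ‖a t - a t₀ - (t - t₀) • D‖ ^ 2 / (t - t₀) ^ 2) (𝓝[≠] t₀) (𝓝 0) := by
  have hslope : (fun t => ‖a t - a t₀ - (t - t₀) • D‖ ^ 2 / (t - t₀) ^ 2)
      =ᶠ[𝓝[≠] t₀] fun t => ‖slope a t₀ t - D‖ ^ 2 := by
    filter_upwards [self_mem_nhdsWithin] with t ht
    have ht : t - t₀ ≠ 0 := sub_ne_zero.mpr ht
    rw [slope_def_module, show (t - t₀)⁻¹ • (a t - a t₀) - D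
        = (t - t₀)⁻¹ • (a t - a t₀ - (t - t₀) • D) by
      rw [smul_sub ((t - t₀)⁻¹) (a t - a t₀), smul_smul, inv_mul_cancel₀ ht, one_smul],
      norm_smul, mul_pow, norm_inv, Real.norm_eq_abs, inv_pow, sq_abs, div_eq_inv_mul]
  rw [hasDerivAt_iff_tendsto_slope, tendsto_iff_norm_sub_tendsto_zero, tendsto_congr' hslope]
  exact ⟨fun h => by simpa using h.pow 2, fun h => by simpa using h.sqrt⟩

variable {E F : Type*} [NormedAddCommGroup E] [InnerProductSpace ℝ E]
  [NormedAddCommGroup F] [InnerProductSpace ℝ F]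

theorem HasDerivAt.inner_eq_zero_of_norm_eq_one {a : ℝ → E} {D : E} {t₀ : ℝ}
    (ha : HasDerivAt a D t₀) (ha1 : ∀ᶠ t in 𝓝 t₀, ‖a t‖ = 1) : ⟪a t₀, D⟫_ℝ = 0 := by
  have hconst : HasDerivAt (‖a ·‖ ^ 2) 0 t₀ :=
    (hasDerivAt_const t₀ (1 : ℝ)).congr_of_eventuallyEq (ha1.mono fun t ht => by simp [ht])
  linarith [ha.norm_sq.unique hconst]

-- From `1 - cⁿ = (1 - c) ∑_{m<n} cᵐ` for `c = ⟪a t, a t₀⟫`, and from `a t₀ ⟂ D`.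
theorem norm_slope_sub_sq_of_inner_eq_pow {a : ℝ → E} {D : E} {A : ℝ → F} {W : F} {t₀ : ℝ}
    (n : ℕ) (horth : ⟪a t₀, D⟫_ℝ = 0) (ha1 : ∀ᶠ t in 𝓝 t₀, ‖a t‖ = 1)
    (hA1 : ∀ᶠ t in 𝓝 t₀, ‖A t‖ = 1) (hAA : ∀ᶠ t in 𝓝 t₀, ⟪A t, A t₀⟫_ℝ = ⟪a t, a t₀⟫_ℝ ^ n)
    (hAW : ∀ᶠ t in 𝓝 t₀, ⟪A t, W⟫_ℝ = n * ⟪a t, D⟫_ℝ * ⟪a t, a t₀⟫_ℝ ^ (n - 1))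
    (hW : ‖W‖ ^ 2 = n * ‖D‖ ^ 2) :
    ∀ᶠ t in 𝓝 t₀, ‖slope A t₀ t - W‖ ^ 2
      = ‖slope a t₀ t‖ ^ 2 * ∑ m ∈ Finset.range n, ⟪a t, a t₀⟫_ℝ ^ m
        - 2 * (n * ⟪a t, a t₀⟫_ℝ ^ (n - 1) * ⟪slope a t₀ t, D⟫_ℝ) + n * ‖D‖ ^ 2 := by
  have hBW : ⟪A t₀, W⟫_ℝ = 0 := by simpa [horth] using hAW.self_of_nhds
  filter_upwards [ha1, hA1, hAA, hAW] with t ha1t hA1t hAAt hAWt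
  simp only [norm_sub_sq_real, slope_def_module, norm_smul, mul_pow, inner_smul_left,
    inner_sub_left, RCLike.conj_to_real, ha1t, hA1t, ha1.self_of_nhds, hA1.self_of_nhds, hAAt,
    hAWt, hBW, horth, hW]
  linear_combination (2 * ‖(t - t₀)⁻¹‖ ^ 2) * geom_sum_mul ⟪a t, a t₀⟫_ℝ n

theorem hasDerivAt_of_inner_eq_pow {a : ℝ → E} {D : E} {A : ℝ → F} {W : F} {t₀ : ℝ} (n : ℕ)
    (ha : HasDerivAt a D t₀) (ha1 : ∀ᶠ t in 𝓝 t₀, ‖a t‖ = 1) (hA1 : ∀ᶠ t in 𝓝 t₀, ‖A t‖ = 1)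
    (hAA : ∀ᶠ t in 𝓝 t₀, ⟪A t, A t₀⟫_ℝ = ⟪a t, a t₀⟫_ℝ ^ n)
    (hAW : ∀ᶠ t in 𝓝 t₀, ⟪A t, W⟫_ℝ = n * ⟪a t, D⟫_ℝ * ⟪a t, a t₀⟫_ℝ ^ (n - 1))
    (hW : ‖W‖ ^ 2 = n * ‖D‖ ^ 2) : HasDerivAt A W t₀ := by
  have hc : Tendsto (fun t => ⟪a t, a t₀⟫_ℝ) (𝓝[≠] t₀) (𝓝 1) := by
    have := (ha.continuousAt.inner (𝕜 := ℝ) (continuousAt_const (y := a t₀))).tendsto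
    rw [real_inner_self_eq_norm_sq, ha1.self_of_nhds, one_pow] at this
    exact this.mono_left nhdsWithin_le_nhds
  have hsa := hasDerivAt_iff_tendsto_slope.mp ha
  have hlim := (((hsa.norm.pow 2).mul (tendsto_finsetSum (Finset.range n) fun m _ => hc.pow m)).sub
    (Tendsto.const_mul 2 (((tendsto_const_nhds (x := (n : ℝ))).mul (hc.pow (n - 1))).mul
      (hsa.inner (𝕜 := ℝ) (tendsto_const_nhds (x := D)))))).add
    (tendsto_const_nhds (x := n * ‖D‖ ^ 2))
  have hzero : ‖D‖ ^ 2 * ∑ m ∈ Finset.range n, (1 : ℝ) ^ m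
      - 2 * (n * 1 ^ (n - 1) * ⟪D, D⟫_ℝ) + n * ‖D‖ ^ 2 = 0 := by
    simp only [one_pow, Finset.sum_const, Finset.card_range, nsmul_eq_mul,
      real_inner_self_eq_norm_sq]
    ring
  rw [hzero] at hlim
  have hgram := norm_slope_sub_sq_of_inner_eq_pow n (ha.inner_eq_zero_of_norm_eq_one ha1) ha1
    hA1 hAA hAW hW
  have hsq := hlim.congr'
    ((eventually_nhdsWithin_of_eventually_nhds hgram).mono fun _ h => h.symm)
  rw [hasDerivAt_iff_tendsto_slope, tendsto_iff_norm_sub_tendsto_zero]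
  simpa using hsq.sqrt

end InnerProductSpace

section L2

variable {Y : Type*} [MeasurableSpace Y] (ν : Measure Y)

open Classical in
/-- The class of `F` in `L²(ν)`, with the junk value `0` when `F` is not square integrable. -/
noncomputable def toL2 (F : Y → ℝ) : Lp ℝ 2 ν :=
  if hF : MemLp F 2 ν then hF.toLp F else 0

variable {ν} {F G H : Y → ℝ}

theorem toL2_of_memLp (hF : MemLp F 2 ν) : toL2 ν F = hF.toLp F := by
  simp [toL2, hF]

theorem inner_toL2 (hF : MemLp F 2 ν) (hG : MemLp G 2 ν) :
    ⟪toL2 ν F, toL2 ν G⟫_ℝ = ∫ y, F y * G y ∂ν := by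
  rw [toL2_of_memLp hF, toL2_of_memLp hG, L2.inner_def]
  refine integral_congr_ae ?_
  filter_upwards [hF.coeFn_toLp, hG.coeFn_toLp] with y hFy hGy
  simp [hFy, hGy, mul_comm]

theorem norm_toL2_sq (hF : MemLp F 2 ν) : ‖toL2 ν F‖ ^ 2 = ∫ y, F y ^ 2 ∂ν := by
  simp_rw [← real_inner_self_eq_norm_sq, inner_toL2 hF hF, sq]

theorem toL2_sub_sub_smul (hF : MemLp F 2 ν) (hG : MemLp G 2 ν) (hH : MemLp H 2 ν) (c : ℝ) :
    toL2 ν (fun y => F y - G y - c * H y) = toL2 ν F - toL2 ν G - c • toL2 ν H := by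
  have hR : MemLp (fun y => F y - G y - c * H y) 2 ν := (hF.sub hG).sub (hH.const_smul c)
  rw [toL2_of_memLp hR, toL2_of_memLp hF, toL2_of_memLp hG, toL2_of_memLp hH,
    ← MemLp.toLp_const_smul, ← MemLp.toLp_sub, ← MemLp.toLp_sub]
  rfl

theorem integral_sub_sub_mul_sq (hF : MemLp F 2 ν) (hG : MemLp G 2 ν) (hH : MemLp H 2 ν)
    (c : ℝ) :
    ∫ y, (F y - G y - c * H y) ^ 2 ∂ν = ‖toL2 ν F - toL2 ν G - c • toL2 ν H‖ ^ 2 := by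
  have hR : MemLp (fun y => F y - G y - c * H y) 2 ν := (hF.sub hG).sub (hH.const_smul c)
  rw [← toL2_sub_sub_smul hF hG hH, norm_toL2_sq hR]

theorem hasDerivAt_toL2_iff {F : ℝ → Y → ℝ} {t₀ : ℝ} (hF : ∀ᶠ t in 𝓝 t₀, MemLp (F t) 2 ν)
    (hH : MemLp H 2 ν) :
    HasDerivAt (fun t => toL2 ν (F t)) (toL2 ν H) t₀ ↔
      Tendsto (fun t => (∫ y, (F t y - F t₀ y - (t - t₀) * H y) ^ 2 ∂ν) / (t - t₀) ^ 2)
        (𝓝[≠] t₀) (𝓝 0) := by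
  rw [hasDerivAt_iff_tendsto_norm_sq_div]
  refine tendsto_congr' ?_
  filter_upwards [nhdsWithin_le_nhds hF] with t ht
  rw [integral_sub_sub_mul_sq ht hF.self_of_nhds hH]

theorem toL2_finsetSum {ι : Type*} (s : Finset ι) {F : ι → Y → ℝ}
    (hF : ∀ k ∈ s, MemLp (F k) 2 ν) :
    toL2 ν (fun y => ∑ k ∈ s, F k y) = ∑ k ∈ s, toL2 ν (F k) := by
  classical
  induction s using Finset.induction_on with
  | empty =>
    simp_rw [Finset.sum_empty]
    rw [toL2_of_memLp MemLp.zero']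
    exact MemLp.toLp_zero _
  | insert k s hk ih =>
    have hs : ∀ j ∈ s, MemLp (F j) 2 ν := fun j hj => hF j (Finset.mem_insert_of_mem hj)
    have hFk : MemLp (F k) 2 ν := hF k (Finset.mem_insert_self k s)
    have hsum : MemLp (fun y => F k y + ∑ j ∈ s, F j y) 2 ν := hFk.add (memLp_finsetSum s hs)
    simp_rw [Finset.sum_insert hk]
    rw [← ih hs, toL2_of_memLp hsum, toL2_of_memLp hFk,
      toL2_of_memLp (memLp_finsetSum s hs), ← MemLp.toLp_add]
    rfl

theorem memLp_two_sqrt_s17 (hF : Integrable F ν) : MemLp (fun y => √(F y)) 2 ν := by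
  refine (memLp_two_iff_integrable_sq
    (Real.continuous_sqrt.comp_aestronglyMeasurable hF.aestronglyMeasurable)).mpr ?_
  simpa only [Real.sq_sqrt'] using hF.pos_part

theorem norm_toL2_sqrt (hF0 : ∀ y, 0 ≤ F y) (hF : ∫ y, F y ∂ν = 1) :
    ‖toL2 ν (fun y => √(F y))‖ = 1 := by
  have hFi : Integrable F ν := Integrable.of_integral_ne_zero (by simp [hF])
  have h := norm_toL2_sq (memLp_two_sqrt_s17 hFi)
  simp only [Real.sq_sqrt (hF0 _), hF] at h
  exact (pow_eq_one_iff_of_nonneg (norm_nonneg _) two_ne_zero).mp h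

theorem memLp_update_const {ι : Type*} [DecidableEq ι] (hF : MemLp F 2 ν) (hG : MemLp G 2 ν)
    (k m : ι) : MemLp (Function.update (fun _ => F) k G m) 2 ν := by
  rcases eq_or_ne m k with rfl | hm
  · rwa [Function.update_self]
  · rwa [Function.update_of_ne hm]

end L2

theorem Fintype.prod_apply_update_const {ι β M : Type*} [Fintype ι] [DecidableEq ι]
    [CommMonoid M] (φ : β → M) (k : ι) (u v : β) :
    ∏ m, φ (Function.update (fun _ => u) k v m) = φ v * φ u ^ (Fintype.card ι - 1) := by
  rw [← Finset.mul_prod_erase _ _ (Finset.mem_univ k), Function.update_self,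
    Finset.prod_congr rfl fun m hm => by rw [Function.update_of_ne (Finset.ne_of_mem_erase hm)],
    Finset.prod_const, Finset.card_erase_of_mem (Finset.mem_univ k), Finset.card_univ]

section Tensor

variable {X ι : Type*} [Fintype ι]

def tensor (g : ι → X → ℝ) (x : ι → X) : ℝ := ∏ k, g k (x k)

/-- The derivative of `t ↦ a(t) ⊗ ⋯ ⊗ a(t)` at `a(t₀) = u` in the direction `a'(t₀) = v`. -/
def tensorPowDeriv [DecidableEq ι] (u v : X → ℝ) (x : ι → X) : ℝ :=
  ∑ k, v (x k) * ∏ m ∈ Finset.univ.erase k, u (x m)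

theorem tensorPowDeriv_eq_sum_tensor [DecidableEq ι] (u v : X → ℝ) :
    tensorPowDeriv (ι := ι) u v = fun x => ∑ k, tensor (Function.update (fun _ => u) k v) x := by
  funext x
  refine Finset.sum_congr rfl fun k _ => ?_
  rw [tensor, ← Finset.mul_prod_erase _ _ (Finset.mem_univ k), Function.update_self]
  exact congrArg _ (Finset.prod_congr rfl fun m hm => by
    rw [Function.update_of_ne (Finset.ne_of_mem_erase hm)])

variable [MeasurableSpace X] {μ : Measure X} [SigmaFinite μ]

theorem memLp_tensor {g : ι → X → ℝ} (hg : ∀ k, MemLp (g k) 2 μ) :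
    MemLp (tensor g) 2 (Measure.pi fun _ => μ) := by
  have hmeas : AEStronglyMeasurable (tensor g) (Measure.pi fun _ => μ) :=
    Finset.aestronglyMeasurable_fun_prod _ fun k _ =>
      (hg k).aestronglyMeasurable.comp_quasiMeasurePreserving
        (Measure.quasiMeasurePreserving_eval _ k)
  refine (memLp_two_iff_integrable_sq hmeas).mpr ?_
  simpa only [tensor, ← Finset.prod_pow] using
    Integrable.fintype_prod fun k => (hg k).integrable_sq

theorem integral_tensor_mul_tensor (g g' : ι → X → ℝ) :
    ∫ x, tensor g x * tensor g' x ∂(Measure.pi fun _ => μ) = ∏ k, ∫ y, g k y * g' k y ∂μ := by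
  simp_rw [tensor, ← Finset.prod_mul_distrib]
  exact integral_fintype_prod_eq_prod (fun k y => g k y * g' k y)

theorem inner_toL2_tensor {g g' : ι → X → ℝ} (hg : ∀ k, MemLp (g k) 2 μ)
    (hg' : ∀ k, MemLp (g' k) 2 μ) :
    ⟪toL2 (Measure.pi fun _ => μ) (tensor g), toL2 (Measure.pi fun _ => μ) (tensor g')⟫_ℝ
      = ∏ k, ⟪toL2 μ (g k), toL2 μ (g' k)⟫_ℝ := by
  rw [inner_toL2 (memLp_tensor hg) (memLp_tensor hg'), integral_tensor_mul_tensor]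
  exact Finset.prod_congr rfl fun k _ => (inner_toL2 (hg k) (hg' k)).symm

variable {u v w : X → ℝ}

theorem inner_toL2_tensor_const (hw : MemLp w 2 μ) (hu : MemLp u 2 μ) :
    ⟪toL2 (Measure.pi fun _ : ι => μ) (tensor fun _ => w),
      toL2 (Measure.pi fun _ : ι => μ) (tensor fun _ => u)⟫_ℝ
      = ⟪toL2 μ w, toL2 μ u⟫_ℝ ^ Fintype.card ι := by
  rw [inner_toL2_tensor (fun _ => hw) (fun _ => hu), Finset.prod_const, Finset.card_univ]

theorem norm_toL2_tensor_const (hu : MemLp u 2 μ) :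
    ‖toL2 (Measure.pi fun _ : ι => μ) (tensor fun _ => u)‖ = ‖toL2 μ u‖ ^ Fintype.card ι := by
  have h := inner_toL2_tensor_const (ι := ι) hu hu
  rw [real_inner_self_eq_norm_sq, real_inner_self_eq_norm_sq, ← pow_mul, mul_comm, pow_mul] at h
  exact (pow_left_inj₀ (norm_nonneg _) (by positivity) two_ne_zero).mp h

variable [DecidableEq ι]

theorem memLp_tensorPowDeriv (hu : MemLp u 2 μ) (hv : MemLp v 2 μ) :
    MemLp (tensorPowDeriv u v) 2 (Measure.pi fun _ : ι => μ) := by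
  rw [tensorPowDeriv_eq_sum_tensor]
  exact memLp_finsetSum _ fun k _ => memLp_tensor (memLp_update_const hu hv k)

theorem toL2_tensorPowDeriv (hu : MemLp u 2 μ) (hv : MemLp v 2 μ) :
    toL2 (Measure.pi fun _ : ι => μ) (tensorPowDeriv u v)
      = ∑ k, toL2 (Measure.pi fun _ : ι => μ) (tensor (Function.update (fun _ => u) k v)) := by
  rw [tensorPowDeriv_eq_sum_tensor,
    toL2_finsetSum _ fun k _ => memLp_tensor (memLp_update_const hu hv k)]

theorem inner_toL2_tensor_const_tensorPowDeriv (hw : MemLp w 2 μ) (hu : MemLp u 2 μ)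
    (hv : MemLp v 2 μ) :
    ⟪toL2 (Measure.pi fun _ : ι => μ) (tensor fun _ => w),
      toL2 (Measure.pi fun _ : ι => μ) (tensorPowDeriv u v)⟫_ℝ
      = Fintype.card ι * ⟪toL2 μ w, toL2 μ v⟫_ℝ
        * ⟪toL2 μ w, toL2 μ u⟫_ℝ ^ (Fintype.card ι - 1) := by
  simp_rw [toL2_tensorPowDeriv hu hv, inner_sum,
    inner_toL2_tensor (fun _ => hw) (memLp_update_const hu hv _),
    Fintype.prod_apply_update_const (fun F => ⟪toL2 μ w, toL2 μ F⟫_ℝ), Finset.sum_const,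
    Finset.card_univ, nsmul_eq_mul, mul_assoc]

theorem inner_toL2_tensor_update_const (hu : MemLp u 2 μ) (hv : MemLp v 2 μ) (hw : MemLp w 2 μ)
    (hu1 : ‖toL2 μ u‖ = 1) (hvu : ⟪toL2 μ v, toL2 μ u⟫_ℝ = 0) (k l : ι) :
    ⟪toL2 (Measure.pi fun _ => μ) (tensor (Function.update (fun _ => u) k v)),
      toL2 (Measure.pi fun _ => μ) (tensor (Function.update (fun _ => u) l w))⟫_ℝ
      = if k = l then ⟪toL2 μ v, toL2 μ w⟫_ℝ else 0 := by
  rw [inner_toL2_tensor (memLp_update_const hu hv k) (memLp_update_const hu hw l)]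
  split_ifs with hkl
  · subst hkl
    rw [← Finset.mul_prod_erase _ _ (Finset.mem_univ k), Function.update_self,
      Function.update_self, Finset.prod_eq_one fun m hm => ?_, mul_one]
    rw [Function.update_of_ne (Finset.ne_of_mem_erase hm),
      Function.update_of_ne (Finset.ne_of_mem_erase hm), real_inner_self_eq_norm_sq, hu1,
      one_pow]
  · refine Finset.prod_eq_zero (Finset.mem_univ k) ?_
    rwa [Function.update_self, Function.update_of_ne hkl]

theorem inner_toL2_tensorPowDeriv (hu : MemLp u 2 μ) (hv : MemLp v 2 μ) (hw : MemLp w 2 μ)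
    (hu1 : ‖toL2 μ u‖ = 1) (hvu : ⟪toL2 μ v, toL2 μ u⟫_ℝ = 0) :
    ⟪toL2 (Measure.pi fun _ : ι => μ) (tensorPowDeriv u v),
      toL2 (Measure.pi fun _ : ι => μ) (tensorPowDeriv u w)⟫_ℝ
      = Fintype.card ι * ⟪toL2 μ v, toL2 μ w⟫_ℝ := by
  simp_rw [toL2_tensorPowDeriv hu hv, toL2_tensorPowDeriv hu hw, sum_inner, inner_sum,
    inner_toL2_tensor_update_const hu hv hw hu1 hvu, Finset.sum_ite_eq, Finset.mem_univ, if_true,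
    Finset.sum_const, Finset.card_univ, nsmul_eq_mul]

theorem integral_tensorPowDeriv_mul (hu : MemLp u 2 μ) (hv : MemLp v 2 μ) (hw : MemLp w 2 μ)
    (hu1 : ‖toL2 μ u‖ = 1) (hvu : ⟪toL2 μ v, toL2 μ u⟫_ℝ = 0) :
    ∫ x, tensorPowDeriv u v x * tensorPowDeriv u w x ∂(Measure.pi fun _ : ι => μ)
      = Fintype.card ι * ∫ y, v y * w y ∂μ := by
  rw [← inner_toL2 (memLp_tensorPowDeriv hu hv) (memLp_tensorPowDeriv hu hw),
    inner_toL2_tensorPowDeriv hu hv hw hu1 hvu, inner_toL2 hv hw]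

theorem hasDerivAt_toL2_tensor {ξ : ℝ → X → ℝ} {t₀ : ℝ} (hξ : ∀ᶠ t in 𝓝 t₀, MemLp (ξ t) 2 μ)
    (hξ1 : ∀ᶠ t in 𝓝 t₀, ‖toL2 μ (ξ t)‖ = 1) (hv : MemLp v 2 μ)
    (hderiv : HasDerivAt (fun t => toL2 μ (ξ t)) (toL2 μ v) t₀) :
    HasDerivAt (fun t => toL2 (Measure.pi fun _ : ι => μ) (tensor fun _ => ξ t))
      (toL2 (Measure.pi fun _ : ι => μ) (tensorPowDeriv (ξ t₀) v)) t₀ := by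
  have hξ₀ := hξ.self_of_nhds
  have horth : ⟪toL2 μ v, toL2 μ (ξ t₀)⟫_ℝ = 0 := by
    rw [real_inner_comm]
    exact hderiv.inner_eq_zero_of_norm_eq_one hξ1
  refine hasDerivAt_of_inner_eq_pow (Fintype.card ι) hderiv hξ1 ?_ ?_ ?_ ?_
  · filter_upwards [hξ, hξ1] with t ht ht1
    rw [norm_toL2_tensor_const ht, ht1, one_pow]
  · filter_upwards [hξ] with t ht
    exact inner_toL2_tensor_const ht hξ₀
  · filter_upwards [hξ] with t ht
    exact inner_toL2_tensor_const_tensorPowDeriv ht hξ₀ hv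
  · rw [← real_inner_self_eq_norm_sq, inner_toL2_tensorPowDeriv hξ₀ hv hv hξ1.self_of_nhds horth,
      real_inner_self_eq_norm_sq]

end Tensor

theorem stmt_17_general {X : Type*} [MeasurableSpace X] (μ : Measure X) [SigmaFinite μ]
    (p n : ℕ)
    (Θ : Set (Fin p → ℝ)) (hΘ : IsOpen Θ) (θ₀ : Fin p → ℝ) (hθ₀ : θ₀ ∈ Θ)
    (f : (Fin p → ℝ) → X → ℝ)
    (hf_nonneg : ∀ θ x, 0 ≤ f θ x)
    (hf_prob : ∀ θ ∈ Θ, ∫ x, f θ x ∂μ = 1)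
    (D : Fin p → X → ℝ) (hD : ∀ i, MemLp (D i) 2 μ)
    (hdiff : ∀ i : Fin p, Tendsto
      (fun t => (∫ x, (Real.sqrt (f (Function.update θ₀ i t) x) - Real.sqrt (f θ₀ x)
          - (t - θ₀ i) * D i x) ^ 2 ∂μ) / (t - θ₀ i) ^ 2)
      (𝓝[≠] (θ₀ i)) (𝓝 0)) :
    (∀ i : Fin p, Tendsto
      (fun t => (∫ x : Fin n → X,
          ((∏ k, Real.sqrt (f (Function.update θ₀ i t) (x k)))
            - (∏ k, Real.sqrt (f θ₀ (x k)))
            - (t - θ₀ i) * ∑ k, D i (x k)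
                * ∏ k' ∈ Finset.univ.erase k, Real.sqrt (f θ₀ (x k'))) ^ 2
          ∂(Measure.pi fun _ : Fin n => μ)) / (t - θ₀ i) ^ 2)
      (𝓝[≠] (θ₀ i)) (𝓝 0))
    ∧ ∀ i j : Fin p,
      4 * (∫ x : Fin n → X,
          (∑ k, D i (x k) * ∏ k' ∈ Finset.univ.erase k, Real.sqrt (f θ₀ (x k')))
          * (∑ k, D j (x k) * ∏ k' ∈ Finset.univ.erase k, Real.sqrt (f θ₀ (x k')))
          ∂(Measure.pi fun _ : Fin n => μ))
        = n * (4 * ∫ y, D i y * D j y ∂μ) := by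
  set ξ : (Fin p → ℝ) → X → ℝ := fun θ x => √(f θ x)
  have hξ : ∀ θ ∈ Θ, MemLp (ξ θ) 2 μ := fun θ hθ =>
    memLp_two_sqrt_s17 (Integrable.of_integral_ne_zero (by simp [hf_prob θ hθ]))
  have hξ1 : ∀ θ ∈ Θ, ‖toL2 μ (ξ θ)‖ = 1 := fun θ hθ =>
    norm_toL2_sqrt (hf_nonneg θ) (hf_prob θ hθ)
  have hnear : ∀ i, ∀ᶠ t in 𝓝 (θ₀ i), Function.update θ₀ i t ∈ Θ := fun i =>
    ((continuous_const.update i continuous_id).tendsto' (θ₀ i) θ₀ (by simp)).eventually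
      (hΘ.eventually_mem hθ₀)
  have hderiv : ∀ i, HasDerivAt (fun t => toL2 μ (ξ (Function.update θ₀ i t))) (toL2 μ (D i))
      (θ₀ i) := fun i => by
    rw [hasDerivAt_toL2_iff ((hnear i).mono fun _ => hξ _) (hD i), Function.update_eq_self]
    exact hdiff i
  refine ⟨fun i => ?_, fun i j => ?_⟩
  · have hA := hasDerivAt_toL2_tensor (ι := Fin n) ((hnear i).mono fun _ => hξ _)
      ((hnear i).mono fun _ => hξ1 _) (hD i) (hderiv i)
    rw [Function.update_eq_self, hasDerivAt_toL2_iff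
      ((hnear i).mono fun _ ht => memLp_tensor fun _ => hξ _ ht)
      (memLp_tensorPowDeriv (hξ _ hθ₀) (hD i))] at hA
    simp only [Function.update_eq_self] at hA
    exact hA
  · have horth : ⟪toL2 μ (D i), toL2 μ (ξ θ₀)⟫_ℝ = 0 := by
      simpa [real_inner_comm] using
        (hderiv i).inner_eq_zero_of_norm_eq_one ((hnear i).mono fun _ => hξ1 _)
    change 4 * ∫ x, tensorPowDeriv (ξ θ₀) (D i) x * tensorPowDeriv (ξ θ₀) (D j) x
      ∂(Measure.pi fun _ : Fin n => μ) = _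
    rw [integral_tensorPowDeriv_mul (hξ _ hθ₀) (hD i) (hD j) (hξ1 _ hθ₀) horth, Fintype.card_fin]
    ring

/-- Fisher information of product models along canonical directions:
if the μ-dominated model `(P_θ)`, `θ ∈ Θ ⊆ ℝ^p` open, is differentiable in `L²(μ)` at
`θ₀` along canonical directions with partial derivatives `D i = ξ̇_{θ₀,i}`, then the
`n`-fold product model is differentiable in `L²(μ^⊗n)` at `θ₀` along canonical
directions, with `i`-th partial derivative `x ↦ Σ_k ξ̇_{θ₀,i}(x_k) Π_{k'≠k} ξ_{θ₀}(x_{k'})`,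
and Fisher information matrix `I_{P^⊗n}(θ₀) = n · I_P(θ₀)`. -/
theorem stmt_17 {X : Type*} [MeasurableSpace X] (μ : Measure X) [SigmaFinite μ]
    (p n : ℕ) (hn : 1 ≤ n)
    (Θ : Set (Fin p → ℝ)) (hΘ : IsOpen Θ) (θ₀ : Fin p → ℝ) (hθ₀ : θ₀ ∈ Θ)
    (f : (Fin p → ℝ) → X → ℝ)
    (hf_meas : Measurable (Function.uncurry f))
    (hf_nonneg : ∀ θ x, 0 ≤ f θ x)
    (hf_prob : ∀ θ ∈ Θ, ∫ x, f θ x ∂μ = 1)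
    (D : Fin p → X → ℝ) (hD : ∀ i, MemLp (D i) 2 μ)
    (hdiff : ∀ i : Fin p, Tendsto
      (fun t => (∫ x, (Real.sqrt (f (Function.update θ₀ i t) x) - Real.sqrt (f θ₀ x)
          - (t - θ₀ i) * D i x) ^ 2 ∂μ) / (t - θ₀ i) ^ 2)
      (𝓝[≠] (θ₀ i)) (𝓝 0)) :
    (∀ i : Fin p, Tendsto
      (fun t => (∫ x : Fin n → X,
          ((∏ k, Real.sqrt (f (Function.update θ₀ i t) (x k)))
            - (∏ k, Real.sqrt (f θ₀ (x k)))
            - (t - θ₀ i) * ∑ k, D i (x k)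
                * ∏ k' ∈ Finset.univ.erase k, Real.sqrt (f θ₀ (x k'))) ^ 2
          ∂(Measure.pi fun _ : Fin n => μ)) / (t - θ₀ i) ^ 2)
      (𝓝[≠] (θ₀ i)) (𝓝 0))
    ∧ ∀ i j : Fin p,
      4 * (∫ x : Fin n → X,
          (∑ k, D i (x k) * ∏ k' ∈ Finset.univ.erase k, Real.sqrt (f θ₀ (x k')))
          * (∑ k, D j (x k) * ∏ k' ∈ Finset.univ.erase k, Real.sqrt (f θ₀ (x k')))
          ∂(Measure.pi fun _ : Fin n => μ))
        = n * (4 * ∫ y, D i y * D j y ∂μ) :=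
  stmt_17_general μ p n Θ hΘ θ₀ hθ₀ f hf_nonneg hf_prob D hD hdiff
end
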